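/- arXiv:1409.5609 — 4 statements merged into one kernel-verified Lean document; each statement's English description precedes it below -/
import Mathlib

section
/- For every k ≥ 6, the porous exponential domination number of the k-th Apollonian network satisfies γ*_e(G_k) ≤ 3^(k-5). -/
/-- A family of Apollonian networks, given by a vertex set `Vert` together with a
generation labeling `gen` and an adjacency relation `adj`, satisfying the recursive
construction: the first generation `U₁` consists of three pairwise adjacent vertices
(forming `G₁`); and for each `k ≥ 1`, for each vertex `u` of generation `k` and each
adjacent pair `{x, y}` of neighbors of `u` in `G_k`, exactly one new vertex of
generation `k + 1` is created, adjacent to exactly `u`, `x`, and `y`.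
The `k`-th Apollonian network `G_k` is the induced subgraph on the vertices of
generation at most `k`. -/
structure ApollonianNetwork where
  Vert : Type
  adj : Vert → Vert → Prop
  adj_symm : ∀ a b, adj a b → adj b a
  adj_irrefl : ∀ a, ¬ adj a a
  gen : Vert → ℕ
  gen_pos : ∀ v, 1 ≤ gen v
  /-- The first generation consists of exactly three vertices. -/
  U1_card : ∃ a b c : Vert, a ≠ b ∧ a ≠ c ∧ b ≠ c ∧ {v | gen v = 1} = {a, b, c}
  /-- `G₁` is a complete graph on the first generation. -/
  U1_complete : ∀ a b, gen a = 1 → gen b = 1 → a ≠ b → adj a b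
  /-- All edges join vertices of distinct generations, except within generation 1. -/
  adj_gen : ∀ a b, adj a b → gen a = gen b → gen a = 1
  /-- Every vertex `v` of generation `k ≥ 2` is adjacent, among the vertices of earlier
  generations, to exactly three vertices `u`, `x`, `y`, where `u` has generation `k - 1`
  and `x`, `y` are neighbors of `u` in `G_{k-1}` that are adjacent to each other. -/
  created : ∀ v, 2 ≤ gen v → ∃ u x y,
    gen u = gen v - 1 ∧ gen x ≤ gen v - 1 ∧ gen y ≤ gen v - 1 ∧
    adj u x ∧ adj u y ∧ adj x y ∧
    {w | adj v w ∧ gen w < gen v} = {u, x, y}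
  /-- For each `k ≥ 1`, each vertex `u` of generation `k`, and each adjacent pair
  `{x, y}` of neighbors of `u` in `G_k`, there is exactly one vertex of generation
  `k + 1` whose neighbors in `G_{k+1}` are exactly `u`, `x`, and `y`. -/
  attach : ∀ k, 1 ≤ k → ∀ u x y,
    gen u = k → gen x ≤ k → gen y ≤ k → x ≠ y →
    adj u x → adj u y → adj x y →
    ∃! v, gen v = k + 1 ∧ {w | adj v w ∧ gen w ≤ k} = ({u, x, y} : Set Vert)

/-- The `k`-th Apollonian network `G_k`: the induced subgraph on the vertices of
generation at most `k`. -/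
def ApollonianNetwork.G (A : ApollonianNetwork) (k : ℕ) :
    SimpleGraph {v : A.Vert // A.gen v ≤ k} where
  Adj a b := A.adj a b
  symm := ⟨fun a b h => A.adj_symm a b h⟩
  loopless := ⟨fun a h => A.adj_irrefl a h⟩

open Classical in
/-- The porous exponential domination weight of a set `S` at a vertex `v`:
`∑_{u ∈ S} 1 / 2 ^ (d(u, v) - 1)`, where vertices at infinite distance from `v`
contribute `0`.  (Note `2 * (1/2) ^ d = 1 / 2 ^ (d - 1)` including for `d = 0`.) -/
noncomputable def expWeight {V : Type*} (G : SimpleGraph V) (S : Finset V) (v : V) : ℝ :=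
  ∑ u ∈ S, if G.Reachable u v then 2 * (2 : ℝ)⁻¹ ^ G.dist u v else 0

/-- `S` is a porous exponential dominating set for `G` if every vertex receives
total weight at least 1. -/
def IsPorousExpDomSet {V : Type*} (G : SimpleGraph V) (S : Finset V) : Prop :=
  ∀ v, 1 ≤ expWeight G S v

/-- The porous exponential domination number `γ*ₑ(G)`: the smallest cardinality of a
porous exponential dominating set for `G` (`⊤` if there is none). -/
noncomputable def porousExpDomNum {V : Type*} (G : SimpleGraph V) : ℕ∞ :=
  sInf {n : ℕ∞ | ∃ S : Finset V, IsPorousExpDomSet G S ∧ (S.card : ℕ∞) = n}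

/-! The dominating set is the whole generation `U_{k-3}`, of size at most `3^(k-5)` since `U_2`
is a single vertex and every vertex of generation at least 2 has at most three children. A
vertex of generation `g ∈ [2, k-3]` has at least `2^(k-3-g)` descendants in `U_{k-3}`, all
within distance `k-3-g`, and a vertex of generation 1 has two neighbours in `U_{k-3}`; either
way its weight is at least 2. A vertex of generation above `k-3` has a neighbour of generation
at most `k-3`, because its three older neighbours form a triangle and so have distinct
generations unless they lie in `U_1`; passing through that neighbour only halves the weight. -/

theorem one_le_expWeight_of_edist_le {V : Type*} {G : SimpleGraph V} {S T : Finset V}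
    (hTS : T ⊆ S) {v : V} {D : ℕ} (hT : ∀ s ∈ T, G.edist s v ≤ D)
    (hcard : 2 ^ D ≤ 2 * T.card) : 1 ≤ expWeight G S v := by
  classical
  have hterm : ∀ s ∈ T, 2 * (2 : ℝ)⁻¹ ^ D ≤
      if G.Reachable s v then 2 * (2 : ℝ)⁻¹ ^ G.dist s v else 0 := by
    intro s hs
    have hreach : G.Reachable s v :=
      SimpleGraph.reachable_of_edist_ne_top (ne_top_of_le_ne_top (by simp) (hT s hs))
    have hdist : G.dist s v ≤ D := by exact_mod_cast hreach.coe_dist_eq_edist ▸ hT s hs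
    rw [if_pos hreach]
    gcongr 2 * ?_
    exact pow_le_pow_of_le_one (by norm_num) (by norm_num) hdist
  calc (1 : ℝ) ≤ T.card * (2 * (2 : ℝ)⁻¹ ^ D) := by
        rw [inv_pow, ← div_eq_mul_inv, mul_div_assoc', le_div_iff₀ (by positivity), one_mul]
        exact_mod_cast (by linarith [hcard] : 2 ^ D ≤ T.card * 2)
    _ ≤ ∑ s ∈ T, if G.Reachable s v then 2 * (2 : ℝ)⁻¹ ^ G.dist s v else 0 := by
        simpa using Finset.card_nsmul_le_sum T _ _ hterm
    _ ≤ expWeight G S v :=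
        Finset.sum_le_sum_of_subset_of_nonneg hTS fun _ _ _ => by split_ifs <;> positivity

namespace ApollonianNetwork

variable {A : ApollonianNetwork}

def lowerNbrs (A : ApollonianNetwork) (v : A.Vert) : Set A.Vert :=
  {w | A.adj v w ∧ A.gen w < A.gen v}

theorem ne_of_adj {a b : A.Vert} (h : A.adj a b) : a ≠ b :=
  fun hab => A.adj_irrefl a (hab ▸ h)

theorem gen_ne_of_adj {a b : A.Vert} (h : A.adj a b) (ha : 2 ≤ A.gen a) : A.gen a ≠ A.gen b :=
  fun hab => by have := A.adj_gen a b h hab; omega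

theorem lowerNbrs_eq_of_gen_eq_succ {v : A.Vert} {k : ℕ} (hv : A.gen v = k + 1) :
    {w | A.adj v w ∧ A.gen w ≤ k} = A.lowerNbrs v := by
  ext w
  exact and_congr_right fun _ => by omega

theorem adj_of_lowerNbrs_eq {v u x y : A.Vert} (h : A.lowerNbrs v = {u, x, y}) :
    A.adj v u ∧ A.adj v x ∧ A.adj v y :=
  ⟨(h.symm.subset (by simp) : u ∈ A.lowerNbrs v).1,
    (h.symm.subset (by simp) : x ∈ A.lowerNbrs v).1,
    (h.symm.subset (by simp) : y ∈ A.lowerNbrs v).1⟩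

theorem exists_lowerNbrs_eq {k : ℕ} (hk : 1 ≤ k) {u x y : A.Vert} (hu : A.gen u = k)
    (hx : A.gen x ≤ k) (hy : A.gen y ≤ k) (hxy : x ≠ y) (hux : A.adj u x) (huy : A.adj u y)
    (hxy' : A.adj x y) : ∃ v, A.gen v = k + 1 ∧ A.lowerNbrs v = {u, x, y} := by
  obtain ⟨v, hv, hN⟩ := (A.attach k hk u x y hu hx hy hxy hux huy hxy').exists
  exact ⟨v, hv, lowerNbrs_eq_of_gen_eq_succ hv ▸ hN⟩

theorem eq_of_lowerNbrs_eq {v₁ v₂ : A.Vert} (hgen : A.gen v₁ = A.gen v₂) (hv₁ : 2 ≤ A.gen v₁)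
    (hN : A.lowerNbrs v₁ = A.lowerNbrs v₂) : v₁ = v₂ := by
  obtain ⟨u, x, y, hu, hx, hy, hux, huy, hxy, hN₁⟩ := A.created v₁ hv₁
  obtain ⟨k, hk⟩ : ∃ k, A.gen v₁ = k + 1 := Nat.exists_eq_add_one.2 (by omega)
  rw [hk, Nat.add_sub_cancel] at hu hx hy
  have hspec : ∀ v, A.gen v = k + 1 → A.lowerNbrs v = {u, x, y} →
      A.gen v = k + 1 ∧ {w | A.adj v w ∧ A.gen w ≤ k} = {u, x, y} :=
    fun v hv hNv => ⟨hv, lowerNbrs_eq_of_gen_eq_succ hv ▸ hNv⟩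
  exact (A.attach k (by omega) u x y hu hx hy (ne_of_adj hxy) hux huy hxy).unique
    (hspec v₁ hk hN₁) (hspec v₂ (hgen ▸ hk) (hN ▸ hN₁))

theorem eq_of_adj_of_gen_add_one_eq {v w w' : A.Vert} (hv : 3 ≤ A.gen v) (hw : A.adj v w)
    (hw' : A.adj v w') (hgw : A.gen w + 1 = A.gen v) (hgw' : A.gen w' + 1 = A.gen v) :
    w = w' := by
  obtain ⟨u, x, y, hu, -, -, hux, huy, -, hN⟩ := A.created v (by omega)
  have hu2 : 2 ≤ A.gen u := by omega
  suffices h : ∀ w, A.adj v w → A.gen w + 1 = A.gen v → w = u from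
    (h w hw hgw).trans (h w' hw' hgw').symm
  intro w hw hgw
  have hmem : w ∈ ({u, x, y} : Set A.Vert) := hN ▸ ⟨hw, by omega⟩
  rcases hmem with rfl | rfl | rfl
  · rfl
  · exact absurd (by omega) (gen_ne_of_adj hux hu2)
  · exact absurd (by omega) (gen_ne_of_adj huy hu2)

theorem exists_adj_gen_eq_one_or_add_three_le {v : A.Vert} (hv : 2 ≤ A.gen v) :
    ∃ z, A.adj v z ∧ (A.gen z = 1 ∨ A.gen z + 3 ≤ A.gen v) := by
  obtain ⟨u, x, y, -, -, -, hux, huy, hxy, hN⟩ := A.created v hv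
  obtain ⟨hvu, hu⟩ : A.adj v u ∧ A.gen u < A.gen v := hN.symm.subset (by simp)
  obtain ⟨hvx, hx⟩ : A.adj v x ∧ A.gen x < A.gen v := hN.symm.subset (by simp)
  obtain ⟨hvy, hy⟩ : A.adj v y ∧ A.gen y < A.gen v := hN.symm.subset (by simp)
  by_contra! h
  have := h u hvu
  have := h x hvx
  have := h y hvy
  have := A.adj_gen u x hux
  have := A.adj_gen u y huy
  have := A.adj_gen x y hxy
  omega

theorem exists_gen_eq_one_ne (x b : A.Vert) : ∃ c, A.gen c = 1 ∧ c ≠ x ∧ c ≠ b := by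
  obtain ⟨a₁, a₂, a₃, h₁₂, h₁₃, h₂₃, hU⟩ := A.U1_card
  have hmem : ∀ c ∈ ({a₁, a₂, a₃} : Set A.Vert), A.gen c = 1 :=
    fun c hc => hU.symm.subset hc
  by_contra! h
  have h₁ := h a₁ (hmem a₁ (by simp))
  have h₂ := h a₂ (hmem a₂ (by simp))
  have h₃ := h a₃ (hmem a₃ (by simp))
  grind (splitImp := true)

theorem not_three_adj_gen_eq_one {v a b c : A.Vert} (hv : 3 ≤ A.gen v) (ha : A.gen a = 1)
    (hb : A.gen b = 1) (hc : A.gen c = 1) (hab : a ≠ b) (hac : a ≠ c) (hbc : b ≠ c)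
    (hva : A.adj v a) (hvb : A.adj v b) (hvc : A.adj v c) : False := by
  obtain ⟨u, x, y, hu, -, -, -, -, -, hN⟩ := A.created v (by omega)
  have hmem : ∀ w, A.adj v w → A.gen w = 1 → w = x ∨ w = y := by
    intro w hw hgw
    have : w ∈ ({u, x, y} : Set A.Vert) := hN ▸ ⟨hw, by omega⟩
    rcases this with rfl | h | h
    · omega
    · exact .inl h
    · exact .inr h
  grind [hmem a hva ha, hmem b hvb hb, hmem c hvc hc]

theorem exists_adj_adj_of_gen_eq_one {x b : A.Vert} (hx : A.gen x = 1) (hb : A.gen b = 1)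
    (hxb : x ≠ b) {g : ℕ} (hg : 1 ≤ g) : ∃ z, A.gen z = g ∧ A.adj z x ∧ A.adj z b := by
  induction g, hg using Nat.le_induction with
  | base =>
    obtain ⟨c, hc, hcx, hcb⟩ := exists_gen_eq_one_ne x b
    exact ⟨c, hc, A.U1_complete c x hc hx hcx, A.U1_complete c b hc hb hcb⟩
  | succ g hg ih =>
    obtain ⟨z, hz, hzx, hzb⟩ := ih
    obtain ⟨v, hv, hN⟩ := exists_lowerNbrs_eq hg hz (by omega) (by omega) hxb hzx hzb
      (A.U1_complete x b hx hb hxb)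
    exact ⟨v, hv, (adj_of_lowerNbrs_eq hN).2⟩

theorem exists_two_adj_of_gen_eq_one {x : A.Vert} (hx : A.gen x = 1) {g : ℕ} (hg : 3 ≤ g) :
    ∃ z₁ z₂, z₁ ≠ z₂ ∧ A.gen z₁ = g ∧ A.gen z₂ = g ∧ A.adj z₁ x ∧ A.adj z₂ x := by
  obtain ⟨b, hb, hbx, -⟩ := exists_gen_eq_one_ne x x
  obtain ⟨c, hc, hcx, hcb⟩ := exists_gen_eq_one_ne x b
  obtain ⟨z₁, hz₁, hz₁x, hz₁b⟩ := exists_adj_adj_of_gen_eq_one hx hb hbx.symm (by omega : 1 ≤ g)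
  obtain ⟨z₂, hz₂, hz₂x, hz₂c⟩ := exists_adj_adj_of_gen_eq_one hx hc hcx.symm (by omega : 1 ≤ g)
  refine ⟨z₁, z₂, ?_, hz₁, hz₂, hz₁x, hz₂x⟩
  rintro rfl
  exact not_three_adj_gen_eq_one (by omega) hx hb hc hbx.symm hcx.symm hcb.symm hz₁x hz₁b hz₂c

theorem ncard_gen_eq_one : {v | A.gen v = 1}.ncard = 3 := by
  obtain ⟨a, b, c, hab, hac, hbc, hU⟩ := A.U1_card
  exact Set.ncard_eq_three.2 ⟨a, b, c, hab, hac, hbc, hU⟩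

theorem lowerNbrs_eq_of_gen_eq_two {v : A.Vert} (hv : A.gen v = 2) :
    A.lowerNbrs v = {w | A.gen w = 1} := by
  obtain ⟨u, x, y, -, -, -, hux, huy, hxy, hN⟩ := A.created v (by omega)
  refine Set.eq_of_subset_of_ncard_le (fun w hw => ?_) ?_
    (Set.finite_of_ncard_ne_zero (by rw [ncard_gen_eq_one]; omega))
  · have := A.gen_pos w
    have : A.gen w < 2 := hv ▸ hw.2
    exact (by omega : A.gen w = 1)
  · rw [ncard_gen_eq_one, show A.lowerNbrs v = {u, x, y} from hN,
      Set.ncard_eq_three.2 ⟨u, x, y, ne_of_adj hux, ne_of_adj huy, ne_of_adj hxy, rfl⟩]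

theorem eq_of_gen_eq_two {v w : A.Vert} (hv : A.gen v = 2) (hw : A.gen w = 2) : v = w :=
  eq_of_lowerNbrs_eq (hv.trans hw.symm) hv.ge
    (by rw [lowerNbrs_eq_of_gen_eq_two hv, lowerNbrs_eq_of_gen_eq_two hw])

theorem exists_gen_eq_two : ∃ v, A.gen v = 2 := by
  obtain ⟨a, b, c, hab, hac, hbc, hU⟩ := A.U1_card
  have hgen : ∀ w ∈ ({a, b, c} : Set A.Vert), A.gen w = 1 := fun w hw => hU.symm.subset hw
  have ha := hgen a (by simp)
  have hb := hgen b (by simp)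
  have hc := hgen c (by simp)
  obtain ⟨v, hv, -⟩ := exists_lowerNbrs_eq le_rfl ha hb.le hc.le hbc
    (A.U1_complete a b ha hb hab) (A.U1_complete a c ha hc hac) (A.U1_complete b c hb hc hbc)
  exact ⟨v, hv⟩

theorem exists_finset_children {u : A.Vert} (hu : 2 ≤ A.gen u) :
    ∃ C : Finset A.Vert, C.card ≤ 3 ∧ ∀ v, A.gen v = A.gen u + 1 → A.adj v u → v ∈ C := by
  classical
  obtain ⟨p, q, r, hp, hq, hr, hpq, hpr, hqr, hNu⟩ := A.created u hu
  obtain ⟨hup, huq, hur⟩ := adj_of_lowerNbrs_eq hNu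
  obtain ⟨c₁, hc₁, hN₁⟩ := exists_lowerNbrs_eq (by omega) rfl (by omega) (by omega)
    (ne_of_adj hpq) hup huq hpq
  obtain ⟨c₂, hc₂, hN₂⟩ := exists_lowerNbrs_eq (by omega) rfl (by omega) (by omega)
    (ne_of_adj hpr) hup hur hpr
  obtain ⟨c₃, hc₃, hN₃⟩ := exists_lowerNbrs_eq (by omega) rfl (by omega) (by omega)
    (ne_of_adj hqr) huq hur hqr
  refine ⟨{c₁, c₂, c₃}, Finset.card_le_three, fun v hv hvu => ?_⟩
  obtain ⟨u', x, y, hu', hx, hy, hux, huy, hxy, hNv⟩ := A.created v (by omega)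
  have hvu' := (adj_of_lowerNbrs_eq hNv).1
  obtain rfl : u = u' := eq_of_adj_of_gen_add_one_eq (by omega) hvu hvu' (by omega) (by omega)
  -- The older neighbours of `v` are `u` and two of `p, q, r`, and they determine `v`.
  have hlow : ∀ w, A.adj u w → A.gen w ≤ A.gen u → w ∈ ({p, q, r} : Set A.Vert) :=
    fun w huw hw => hNu ▸ ⟨huw, lt_of_le_of_ne hw (gen_ne_of_adj huw hu).symm⟩
  have hx' := hlow x hux (by omega)
  have hy' := hlow y huy (by omega)
  have key : ∀ a b c, A.gen c = A.gen u + 1 → A.lowerNbrs c = {u, a, b} →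
      (x = a ∧ y = b ∨ x = b ∧ y = a) → v = c := by
    rintro a b c hc hNc (⟨rfl, rfl⟩ | ⟨rfl, rfl⟩) <;>
      refine eq_of_lowerNbrs_eq (hv.trans hc.symm) (by omega) (hNv.trans (hNc ▸ ?_))
    · rfl
    · exact congrArg (insert u) (Set.pair_comm _ _)
  have := ne_of_adj hxy
  have := key p q c₁ hc₁ hN₁
  have := key p r c₂ hc₂ hN₂
  have := key q r c₃ hc₃ hN₃
  grind

theorem exists_finset_card_le_of_gen_eq {g : ℕ} (hg : 2 ≤ g) :
    ∃ F : Finset A.Vert, F.card ≤ 3 ^ (g - 2) ∧ ∀ v, A.gen v = g → v ∈ F := by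
  classical
  induction g, hg using Nat.le_induction with
  | base =>
    obtain ⟨w, hw⟩ := exists_gen_eq_two (A := A)
    exact ⟨{w}, by simp, fun v hv => Finset.mem_singleton.2 (eq_of_gen_eq_two hv hw)⟩
  | succ g hg ih =>
    obtain ⟨F, hFcard, hF⟩ := ih
    choose! C hCcard hC using fun u (hu : 2 ≤ A.gen u) => exists_finset_children hu
    refine ⟨(F.filter (A.gen · = g)).biUnion C, ?_, fun v hv => ?_⟩
    · calc ((F.filter (A.gen · = g)).biUnion C).card ≤ (F.filter (A.gen · = g)).card * 3 :=
            Finset.card_biUnion_le_card_mul _ _ _ fun u hu => hCcard u (by simp_all)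
        _ ≤ 3 ^ (g + 1 - 2) := by
            rw [show g + 1 - 2 = g - 2 + 1 by omega, pow_succ]
            exact Nat.mul_le_mul_right 3 ((Finset.card_filter_le _ _).trans hFcard)
    · obtain ⟨u, x, y, hu, -, -, -, -, -, hN⟩ := A.created v (by omega)
      exact Finset.mem_biUnion.2 ⟨u, Finset.mem_filter.2 ⟨hF u (by omega), by omega⟩,
        hC u (by omega) v (by omega) (adj_of_lowerNbrs_eq hN).1⟩

theorem exists_two_children {t : A.Vert} (ht : 2 ≤ A.gen t) :
    ∃ c₁ c₂, c₁ ≠ c₂ ∧ A.gen c₁ = A.gen t + 1 ∧ A.gen c₂ = A.gen t + 1 ∧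
      A.adj c₁ t ∧ A.adj c₂ t := by
  obtain ⟨u, x, y, hu, hx, hy, hux, huy, hxy, hN⟩ := A.created t ht
  obtain ⟨htu, htx, hty⟩ := adj_of_lowerNbrs_eq hN
  obtain ⟨c₁, hc₁, hN₁⟩ := exists_lowerNbrs_eq (by omega) rfl (by omega) (by omega)
    (ne_of_adj hux) htu htx hux
  obtain ⟨c₂, hc₂, hN₂⟩ := exists_lowerNbrs_eq (by omega) rfl (by omega) (by omega)
    (ne_of_adj huy) htu hty huy
  refine ⟨c₁, c₂, fun h => ?_, hc₁, hc₂, (adj_of_lowerNbrs_eq hN₁).1,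
    (adj_of_lowerNbrs_eq hN₂).1⟩
  have hmem : x ∈ ({t, u, y} : Set A.Vert) := hN₂ ▸ h ▸ hN₁.symm.subset (by simp)
  rcases hmem with rfl | rfl | rfl
  · exact ne_of_adj htx rfl
  · exact ne_of_adj hux rfl
  · exact ne_of_adj hxy rfl

variable {k : ℕ}

theorem exists_finset_descendants (z : {v // A.gen v ≤ k}) (hz : 2 ≤ A.gen z) {j : ℕ}
    (hj : A.gen z + j ≤ k) :
    ∃ T : Finset {v // A.gen v ≤ k}, 2 ^ j ≤ T.card ∧
      ∀ s ∈ T, A.gen s = A.gen z + j ∧ (A.G k).edist s z ≤ j := by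
  classical
  induction j with
  | zero => exact ⟨{z}, by simp, by simp⟩
  | succ j ih =>
    obtain ⟨T, hTcard, hT⟩ := ih (by omega)
    have hchildren : ∀ t ∈ T, ∃ C : Finset {v // A.gen v ≤ k}, C.card = 2 ∧
        ∀ c ∈ C, A.gen c = A.gen z + (j + 1) ∧ (A.G k).Adj c t := by
      intro t ht
      obtain ⟨c₁, c₂, hne, hc₁, hc₂, hc₁t, hc₂t⟩ := exists_two_children (t := t.1) (by grind)
      refine ⟨{⟨c₁, by grind⟩, ⟨c₂, by grind⟩},
        Finset.card_pair fun h => hne (congrArg Subtype.val h), ?_⟩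
      simp only [Finset.mem_insert, Finset.mem_singleton, forall_eq_or_imp, forall_eq]
      exact ⟨⟨by grind, hc₁t⟩, ⟨by grind, hc₂t⟩⟩
    choose! C hCcard hC using hchildren
    refine ⟨T.biUnion C, ?_, fun s hs => ?_⟩
    · have hdisj : (T : Set {v // A.gen v ≤ k}).PairwiseDisjoint C := by
        intro t ht t' ht' htt'
        refine Finset.disjoint_left.2 fun c hc hc' => htt' (Subtype.ext ?_)
        exact eq_of_adj_of_gen_add_one_eq (v := c.1) (by grind) (hC t ht c hc).2
          (hC t' ht' c hc').2 (by grind) (by grind)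
      rw [Finset.card_biUnion hdisj, Finset.sum_congr rfl hCcard, Finset.sum_const, smul_eq_mul,
        pow_succ]
      omega
    · obtain ⟨t, ht, hst⟩ := Finset.mem_biUnion.1 hs
      refine ⟨(hC t ht s hst).1, ?_⟩
      calc (A.G k).edist s z ≤ (A.G k).edist s t + (A.G k).edist t z :=
            SimpleGraph.edist_triangle
        _ ≤ 1 + j := add_le_add (SimpleGraph.edist_eq_one_iff_adj.2 (hC t ht s hst).2).le
            (hT t ht).2
        _ = (j + 1 : ℕ) := by push_cast; ring

theorem exists_finset_gen_eq_edist_le_of_gen_le {g : ℕ} (hg : 3 ≤ g) (hgk : g ≤ k)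
    (z : {v // A.gen v ≤ k}) (hz : A.gen z ≤ g) :
    ∃ (T : Finset {v // A.gen v ≤ k}) (D : ℕ), 2 ^ D ≤ T.card ∧
      ∀ s ∈ T, A.gen s = g ∧ (A.G k).edist s z ≤ D := by
  classical
  rcases (A.gen_pos z).eq_or_lt with hz1 | hz2
  · obtain ⟨z₁, z₂, hne, hz₁, hz₂, hz₁z, hz₂z⟩ := exists_two_adj_of_gen_eq_one hz1.symm hg
    refine ⟨{⟨z₁, by omega⟩, ⟨z₂, by omega⟩}, 1,
      (Finset.card_pair fun h => hne (congrArg Subtype.val h)).ge, ?_⟩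
    simp only [Finset.mem_insert, Finset.mem_singleton, forall_eq_or_imp, forall_eq]
    exact ⟨⟨hz₁, (SimpleGraph.edist_eq_one_iff_adj.2 hz₁z).le⟩,
      ⟨hz₂, (SimpleGraph.edist_eq_one_iff_adj.2 hz₂z).le⟩⟩
  · obtain ⟨T, hT, hTs⟩ := exists_finset_descendants z hz2 (j := g - A.gen z) (by omega)
    exact ⟨T, g - A.gen z, hT, fun s hs => ⟨by grind, (hTs s hs).2⟩⟩

theorem exists_finset_gen_eq_sub_three_edist_le (hk : 6 ≤ k) (v : {v // A.gen v ≤ k}) :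
    ∃ (T : Finset {v // A.gen v ≤ k}) (D : ℕ), 2 ^ D ≤ 2 * T.card ∧
      ∀ s ∈ T, A.gen s = k - 3 ∧ (A.G k).edist s v ≤ D := by
  by_cases hv : A.gen v ≤ k - 3
  · obtain ⟨T, D, hD, hT⟩ :=
      exists_finset_gen_eq_edist_le_of_gen_le (by omega) (by omega) v hv
    exact ⟨T, D, by omega, hT⟩
  obtain ⟨z, hvz, hz⟩ := exists_adj_gen_eq_one_or_add_three_le (v := v.1) (by omega)
  obtain ⟨T, D, hD, hT⟩ := exists_finset_gen_eq_edist_le_of_gen_le (k := k) (g := k - 3)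
    (by omega) (by omega) ⟨z, by grind⟩ (by grind)
  refine ⟨T, D + 1, by rw [pow_succ]; omega, fun s hs => ⟨(hT s hs).1, ?_⟩⟩
  calc (A.G k).edist s v ≤ (A.G k).edist s ⟨z, _⟩ + (A.G k).edist ⟨z, _⟩ v :=
        SimpleGraph.edist_triangle
    _ ≤ D + 1 := add_le_add (hT s hs).2
        (SimpleGraph.edist_eq_one_iff_adj.2 (A.adj_symm _ _ hvz)).le
    _ = (D + 1 : ℕ) := by push_cast; ring

end ApollonianNetwork

theorem stmt0 (A : ApollonianNetwork) (k : ℕ) (hk : 6 ≤ k) :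
    porousExpDomNum (A.G k) ≤ (3 ^ (k - 5) : ℕ∞) := by
  classical
  obtain ⟨F, hFcard, hF⟩ := A.exists_finset_card_le_of_gen_eq (g := k - 3) (by omega)
  let S := F.subtype (A.gen · ≤ k)
  have hS : IsPorousExpDomSet (A.G k) S := fun v => by
    obtain ⟨T, D, hD, hT⟩ := A.exists_finset_gen_eq_sub_three_edist_le hk v
    exact one_le_expWeight_of_edist_le (fun s hs => Finset.mem_subtype.2 (hF _ (hT s hs).1))
      (fun s hs => (hT s hs).2) hD
  have hScard : S.card ≤ 3 ^ (k - 5) := by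
    rw [Finset.card_subtype, show k - 5 = k - 3 - 2 by omega]
    exact (Finset.card_filter_le _ _).trans hFcard
  calc porousExpDomNum (A.G k) ≤ S.card := sInf_le ⟨S, hS, rfl⟩
    _ ≤ (3 ^ (k - 5) : ℕ∞) := by exact_mod_cast hScard
end

section
/- For every k ≥ 1, the porous exponential domination number of the k-th Apollonian network satisfies γ*_e(G_k) ≥ ⌈(2k + 5)/12⌉. -/
/-!
If `S` is a porous exponential dominating set and `x₁, …, x_t` are vertices at pairwise distance
at least `2r + 1`, then either every `xᵢ` has its own element of `S` within distance `r`, or some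
`xᵢ` is farther than `r` from all of `S` and receives weight at most `|S| / 2^r`; so
`|S| ≥ min t 2^r`.

Such vertices are found deep inside triangles of `G_k`. The depth of a vertex in a triangle is `1`
at its corners, `0` outside the face it bounds, and for a later vertex one more than the least
depth of its three parents when that is positive. It is 1-Lipschitz, so vertices of depth `r + 1` in triangles with disjoint closed
faces are at distance at least `2r + 1`; and subdividing a triangle again and again at its newest
vertex gains one unit of depth every three generations. For `N = ⌈(2k+5)/12⌉ ≤ 3`, two or three
triangles close to the first generation suffice; for `N ≥ 4`, take one triangle inside each of
the first `N` faces hanging off such a subdivision chain, with `r = N - 2`.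
-/

lemma le_two_pow_sub_two {N : ℕ} (hN : 4 ≤ N) : N ≤ 2 ^ (N - 2) := by
  obtain ⟨m, rfl⟩ : ∃ m, N = m + 4 := ⟨N - 4, by omega⟩
  have := m.lt_two_pow_self
  rw [show m + 4 - 2 = m + 2 by omega, pow_add]
  omega

lemma twelve_mul_ceil_toNat_le (k : ℕ) : 12 * ⌈(2 * (k : ℚ) + 5) / 12⌉.toNat ≤ 2 * k + 16 := by
  have hlt := Int.ceil_lt_add_one ((2 * (k : ℚ) + 5) / 12)
  have hnonneg : 0 ≤ ⌈(2 * (k : ℚ) + 5) / 12⌉ := Int.ceil_nonneg (by positivity)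
  have hq : (12 * ⌈(2 * (k : ℚ) + 5) / 12⌉ : ℚ) < 2 * k + 17 := by linarith
  have hz : 12 * ⌈(2 * (k : ℚ) + 5) / 12⌉ < 2 * (k : ℤ) + 17 := by exact_mod_cast hq
  omega

namespace SimpleGraph

variable {V : Type*} {G : SimpleGraph V}

lemma Walk.sub_le_length {f : V → ℤ} (hf : ∀ a b, G.Adj a b → f a ≤ f b + 1) {u v : V}
    (p : G.Walk u v) : f u - f v ≤ p.length := by
  induction p with
  | nil => simp
  | cons h _ ih =>
    have := hf _ _ h
    rw [Walk.length_cons]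
    push_cast
    omega

lemma Reachable.sub_le_dist {f : V → ℤ} (hf : ∀ a b, G.Adj a b → f a ≤ f b + 1) {u v : V}
    (h : G.Reachable u v) : f u - f v ≤ G.dist u v := by
  obtain ⟨p, hp⟩ := h.exists_walk_length_eq_dist
  exact hp ▸ p.sub_le_length hf

end SimpleGraph

section PorousExpDomination

variable {V : Type*} {G : SimpleGraph V} {S : Finset V}

lemma IsPorousExpDomSet.nonempty [Nonempty V] (hS : IsPorousExpDomSet G S) : S.Nonempty := by
  rw [Finset.nonempty_iff_ne_empty]
  rintro rfl
  exact absurd (hS (Classical.arbitrary V)) (by simp [expWeight])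

lemma IsPorousExpDomSet.two_pow_le_card (hS : IsPorousExpDomSet G S) {v : V} {r : ℕ}
    (hv : ∀ u ∈ S, G.Reachable u v → r < G.dist u v) : 2 ^ r ≤ S.card := by
  classical
  have hterm : ∀ u ∈ S,
      (if G.Reachable u v then 2 * (2 : ℝ)⁻¹ ^ G.dist u v else 0) ≤ (2 : ℝ)⁻¹ ^ r := by
    intro u hu
    split_ifs with hreach
    · calc 2 * (2 : ℝ)⁻¹ ^ G.dist u v ≤ 2 * (2 : ℝ)⁻¹ ^ (r + 1) := by
            gcongr 2 * ?_
            exact pow_le_pow_of_le_one (by norm_num) (by norm_num) (hv u hu hreach)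
        _ = (2 : ℝ)⁻¹ ^ r := by ring
    · positivity
  have hweight : (1 : ℝ) ≤ S.card * (2 : ℝ)⁻¹ ^ r := by
    calc (1 : ℝ) ≤ expWeight G S v := hS v
      _ ≤ ∑ _u ∈ S, (2 : ℝ)⁻¹ ^ r := Finset.sum_le_sum hterm
      _ = S.card * (2 : ℝ)⁻¹ ^ r := by rw [Finset.sum_const, nsmul_eq_mul]
  rw [inv_pow, ← div_eq_mul_inv, one_le_div (by positivity)] at hweight
  exact_mod_cast hweight

lemma card_le_card_of_forall_exists_near {t r : ℕ} (x : Fin t → V)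
    (hfar : ∀ i j, i ≠ j → G.Reachable (x i) (x j) → 2 * r + 1 ≤ G.dist (x i) (x j))
    (hnear : ∀ i, ∃ u ∈ S, G.Reachable u (x i) ∧ G.dist u (x i) ≤ r) : t ≤ S.card := by
  choose f hfS hreach hdist using hnear
  have hinj : Function.Injective fun i => (⟨f i, hfS i⟩ : S) := by
    intro i j hij
    by_contra hne
    have hfij : f i = f j := congrArg Subtype.val hij
    have htri : G.dist (x i) (x j) ≤ G.dist (f i) (x i) + G.dist (f j) (x j) := by
      have := (hreach i).symm.dist_triangle_left (x j)
      rw [SimpleGraph.dist_comm (u := x i) (v := f i)] at this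
      rwa [hfij] at this ⊢
    have := hfar i j hne ((hreach i).symm.trans (hfij ▸ hreach j))
    have := hdist i
    have := hdist j
    omega
  simpa using Fintype.card_le_of_injective _ hinj

lemma IsPorousExpDomSet.min_le_card (hS : IsPorousExpDomSet G S) {t r : ℕ} (x : Fin t → V)
    (hfar : ∀ i j, i ≠ j → G.Reachable (x i) (x j) → 2 * r + 1 ≤ G.dist (x i) (x j)) :
    min t (2 ^ r) ≤ S.card := by
  by_cases hnear : ∀ i, ∃ u ∈ S, G.Reachable u (x i) ∧ G.dist u (x i) ≤ r
  · exact (min_le_left _ _).trans (card_le_card_of_forall_exists_near x hfar hnear)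
  · push Not at hnear
    obtain ⟨i, hi⟩ := hnear
    exact (min_le_right _ _).trans (hS.two_pow_le_card hi)

lemma le_porousExpDomNum {n : ℕ} (h : ∀ S, IsPorousExpDomSet G S → n ≤ S.card) :
    (n : ℕ∞) ≤ porousExpDomNum G :=
  le_sInf fun _ ⟨S, hS, hcard⟩ => hcard ▸ by exact_mod_cast h S hS

end PorousExpDomination

namespace ApollonianNetwork

variable {A : ApollonianNetwork}

variable (A) in
def parents (v : A.Vert) : Set A.Vert := {w | A.adj v w ∧ A.gen w < A.gen v}

lemma gen_lt_of_mem_parents {v w : A.Vert} (h : w ∈ A.parents v) : A.gen w < A.gen v := h.2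

lemma adj_of_mem_parents {v w : A.Vert} (h : w ∈ A.parents v) : A.adj v w := h.1

variable (A) in
structure Triangle where
  apex : A.Vert
  left : A.Vert
  right : A.Vert
  gen_left_le : A.gen left ≤ A.gen apex
  gen_right_le : A.gen right ≤ A.gen apex
  left_ne_right : left ≠ right
  adj_left : A.adj apex left
  adj_right : A.adj apex right
  adj_left_right : A.adj left right

namespace Triangle

variable (T : Triangle A)

def verts : Set A.Vert := {T.apex, T.left, T.right}

lemma apex_ne_left : T.apex ≠ T.left := fun h => A.adj_irrefl _ (h ▸ T.adj_left)

lemma apex_ne_right : T.apex ≠ T.right := fun h => A.adj_irrefl _ (h ▸ T.adj_right)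

lemma gen_le_of_mem_verts {v : A.Vert} (hv : v ∈ T.verts) : A.gen v ≤ A.gen T.apex := by
  rcases hv with rfl | rfl | rfl
  exacts [le_rfl, T.gen_left_le, T.gen_right_le]

lemma ncard_verts : T.verts.ncard = 3 :=
  Set.ncard_eq_three.2 ⟨_, _, _, T.apex_ne_left, T.apex_ne_right, T.left_ne_right, rfl⟩

lemma gen_left_lt (h : 2 ≤ A.gen T.apex) : A.gen T.left < A.gen T.apex :=
  T.gen_left_le.lt_of_ne fun he => by have := A.adj_gen _ _ T.adj_left he.symm; omega

lemma gen_right_lt (h : 2 ≤ A.gen T.apex) : A.gen T.right < A.gen T.apex :=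
  T.gen_right_le.lt_of_ne fun he => by have := A.adj_gen _ _ T.adj_right he.symm; omega

lemma verts_subset_insert_parents (h : 2 ≤ A.gen T.apex) :
    T.verts ⊆ insert T.apex (A.parents T.apex) := by
  rintro v (rfl | rfl | rfl)
  exacts [Set.mem_insert _ _, Or.inr ⟨T.adj_left, T.gen_left_lt h⟩,
    Or.inr ⟨T.adj_right, T.gen_right_lt h⟩]

lemma exists_child : ∃ v, A.gen v = A.gen T.apex + 1 ∧
    {w | A.adj v w ∧ A.gen w ≤ A.gen T.apex} = T.verts :=
  (A.attach _ (A.gen_pos _) _ _ _ rfl T.gen_left_le T.gen_right_le T.left_ne_right T.adj_left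
    T.adj_right T.adj_left_right).exists

noncomputable def child : A.Vert := T.exists_child.choose

lemma gen_child : A.gen T.child = A.gen T.apex + 1 :=
  T.exists_child.choose_spec.1

lemma parents_child : A.parents T.child = T.verts := by
  rw [← T.exists_child.choose_spec.2]
  ext w
  show A.adj T.child w ∧ A.gen w < A.gen T.child ↔ A.adj T.child w ∧ A.gen w ≤ A.gen T.apex
  rw [gen_child, Nat.lt_succ_iff]

lemma adj_child {v : A.Vert} (hv : v ∈ T.verts) : A.adj T.child v :=
  adj_of_mem_parents (T.parents_child ▸ hv)

noncomputable def next : Triangle A where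
  apex := T.child
  left := T.apex
  right := T.left
  gen_left_le := by rw [gen_child]; omega
  gen_right_le := by rw [gen_child]; have := T.gen_left_le; omega
  left_ne_right := T.apex_ne_left
  adj_left := T.adj_child (by simp [verts])
  adj_right := T.adj_child (by simp [verts])
  adj_left_right := T.adj_left

noncomputable def nextRight : Triangle A where
  apex := T.child
  left := T.apex
  right := T.right
  gen_left_le := by rw [gen_child]; omega
  gen_right_le := by rw [gen_child]; have := T.gen_right_le; omega
  left_ne_right := T.apex_ne_right
  adj_left := T.adj_child (by simp [verts])
  adj_right := T.adj_child (by simp [verts])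
  adj_left_right := T.adj_right

noncomputable def nextBase : Triangle A where
  apex := T.child
  left := T.left
  right := T.right
  gen_left_le := by rw [gen_child]; have := T.gen_left_le; omega
  gen_right_le := by rw [gen_child]; have := T.gen_right_le; omega
  left_ne_right := T.left_ne_right
  adj_left := T.adj_child (by simp [verts])
  adj_right := T.adj_child (by simp [verts])
  adj_left_right := T.adj_left_right

lemma verts_next_subset : T.next.verts ⊆ insert T.child T.verts := by
  rintro v (rfl | rfl | rfl) <;> simp [next, verts]

lemma verts_nextRight_subset : T.nextRight.verts ⊆ insert T.child T.verts := by
  rintro v (rfl | rfl | rfl) <;> simp [nextRight, verts]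

lemma verts_nextBase_subset : T.nextBase.verts ⊆ insert T.child T.verts := by
  rintro v (rfl | rfl | rfl) <;> simp [nextBase, verts]

noncomputable def chain (n : ℕ) : A.Vert := (next^[n] T).child

lemma gen_apex_iterate_next (n : ℕ) : A.gen (next^[n] T).apex = A.gen T.apex + n := by
  induction n with
  | zero => rfl
  | succ n ih =>
    rw [Function.iterate_succ_apply']
    exact (gen_child _).trans (by rw [ih]; rfl)

lemma gen_chain (n : ℕ) : A.gen (T.chain n) = A.gen T.apex + n + 1 := by
  rw [chain, gen_child, gen_apex_iterate_next]

lemma chain_injective : Function.Injective T.chain := fun i j h => by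
  have := congrArg A.gen h
  rw [gen_chain, gen_chain] at this
  omega

lemma chain_iterate_next (m n : ℕ) : (next^[m] T).chain n = T.chain (n + m) := by
  rw [chain, chain, ← Function.iterate_add_apply]

lemma parents_chain (n : ℕ) : A.parents (T.chain n) = (next^[n] T).verts :=
  parents_child _

lemma verts_iterate_next_add_three (n : ℕ) :
    (next^[n + 3] T).verts = {T.chain (n + 2), T.chain (n + 1), T.chain n} := by
  simp only [Function.iterate_succ_apply', verts, next, chain]

lemma mem_verts_iterate_next {n : ℕ} {v : A.Vert} (hv : v ∈ (next^[n] T).verts) :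
    v ∈ T.verts ∨ ∃ i < n, v = T.chain i := by
  induction n generalizing v with
  | zero => exact Or.inl hv
  | succ n ih =>
    rw [Function.iterate_succ_apply'] at hv
    rcases verts_next_subset _ hv with rfl | hv
    · exact Or.inr ⟨n, n.lt_succ_self, rfl⟩
    · rcases ih hv with hv | ⟨i, hi, rfl⟩
      exacts [Or.inl hv, Or.inr ⟨i, by omega, rfl⟩]

noncomputable def inner : Triangle A := next^[3] T

lemma gen_inner : A.gen T.inner.apex = A.gen T.apex + 3 := T.gen_apex_iterate_next 3

noncomputable def side (j : ℕ) : Triangle A := (next^[j + 3] T).nextRight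

lemma verts_side (j : ℕ) :
    (T.side j).verts = {T.chain (j + 3), T.chain (j + 2), T.chain j} := by
  simp only [side, nextRight, verts, Function.iterate_succ_apply', next, chain]

lemma gen_side (j : ℕ) : A.gen (T.side j).apex = A.gen T.apex + j + 4 :=
  (gen_chain T (j + 3)).trans (by omega)

lemma gen_inner_side (j : ℕ) : A.gen (T.side j).inner.apex = A.gen T.apex + j + 7 := by
  rw [gen_inner, gen_side]

end Triangle

variable (A) in
lemma exists_triangle_gen_one : ∃ T : Triangle A, A.gen T.apex = 1 := by
  obtain ⟨a, b, c, hab, hac, hbc, hU⟩ := A.U1_card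
  have hgen : ∀ v ∈ ({a, b, c} : Set A.Vert), A.gen v = 1 := fun v hv => by
    rw [← hU] at hv
    exact hv
  have ha := hgen a (by simp)
  have hb := hgen b (by simp)
  have hc := hgen c (by simp)
  exact ⟨⟨a, b, c, by omega, by omega, hbc, A.U1_complete a b ha hb hab,
    A.U1_complete a c ha hc hac, A.U1_complete b c hb hc hbc⟩, ha⟩

lemma exists_parents_eq_verts {v : A.Vert} (hv : 2 ≤ A.gen v) :
    ∃ C : Triangle A, A.parents v = C.verts := by
  obtain ⟨u, x, y, hu, hx, hy, hux, huy, hxy, hset⟩ := A.created v hv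
  exact ⟨⟨u, x, y, by omega, by omega, fun h => A.adj_irrefl _ (h ▸ hxy), hux, huy, hxy⟩,
    hset⟩

noncomputable def creator {v : A.Vert} (hv : 2 ≤ A.gen v) : Triangle A :=
  (exists_parents_eq_verts hv).choose

lemma parents_eq_verts_creator {v : A.Vert} (hv : 2 ≤ A.gen v) :
    A.parents v = (creator hv).verts :=
  (exists_parents_eq_verts hv).choose_spec

lemma ncard_parents {v : A.Vert} (hv : 2 ≤ A.gen v) : (A.parents v).ncard = 3 := by
  rw [parents_eq_verts_creator hv, Triangle.ncard_verts]

namespace Triangle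

open Classical in
/-- `T.depth v` is positive exactly on the closed face bounded by `T` in the planar drawing (a
later vertex lies in it iff its three parents do) and equals `1` at the corners of `T`. -/
noncomputable def depth (T : Triangle A) (v : A.Vert) : ℕ :=
  if v ∈ T.verts then 1
  else if h : A.gen v ≤ A.gen T.apex then 0
  else
    let C := creator (v := v) (by have := A.gen_pos T.apex; omega)
    let m := min (depth T C.apex) (min (depth T C.left) (depth T C.right))
    if m = 0 then 0 else m + 1
termination_by A.gen v
decreasing_by
  all_goals
    apply gen_lt_of_mem_parents
    rw [parents_eq_verts_creator (by have := A.gen_pos T.apex; omega)]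
    simp [verts]

variable (T : Triangle A)

lemma depth_of_mem {v : A.Vert} (hv : v ∈ T.verts) : T.depth v = 1 := by
  rw [depth, if_pos hv]

lemma depth_of_notMem_of_gen_le {v : A.Vert} (hv : v ∉ T.verts) (h : A.gen v ≤ A.gen T.apex) :
    T.depth v = 0 := by
  rw [depth, if_neg hv, dif_pos h]

lemma depth_le_one_of_gen_le {v : A.Vert} (h : A.gen v ≤ A.gen T.apex) : T.depth v ≤ 1 := by
  by_cases hv : v ∈ T.verts
  · rw [T.depth_of_mem hv]
  · rw [T.depth_of_notMem_of_gen_le hv h]; omega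

lemma exists_min_parent {v : A.Vert} (h : A.gen T.apex < A.gen v) :
    ∃ s ∈ A.parents v, (∀ a ∈ A.parents v, T.depth s ≤ T.depth a) ∧
      T.depth v = if T.depth s = 0 then 0 else T.depth s + 1 := by
  have hv : 2 ≤ A.gen v := by have := A.gen_pos T.apex; omega
  have hnot : v ∉ T.verts := fun hv' => (T.gen_le_of_mem_verts hv').not_gt h
  rw [depth, if_neg hnot, dif_neg h.not_ge, parents_eq_verts_creator hv]
  set C := creator hv
  obtain ⟨s, hs, hmin⟩ : ∃ s ∈ C.verts,
      T.depth s = min (T.depth C.apex) (min (T.depth C.left) (T.depth C.right)) := by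
    rcases min_choice (T.depth C.apex) (min (T.depth C.left) (T.depth C.right)) with h | h
    · exact ⟨C.apex, by simp [verts], h.symm⟩
    rcases min_choice (T.depth C.left) (T.depth C.right) with h' | h'
    · exact ⟨C.left, by simp [verts], (h.trans h').symm⟩
    · exact ⟨C.right, by simp [verts], (h.trans h').symm⟩
  refine ⟨s, hs, ?_, by rw [hmin]⟩
  rintro a (rfl | rfl | rfl) <;> omega

lemma succ_le_depth {v : A.Vert} (h : A.gen T.apex < A.gen v) {m : ℕ} (hm : 1 ≤ m)
    (hle : ∀ a ∈ A.parents v, m ≤ T.depth a) : m + 1 ≤ T.depth v := by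
  obtain ⟨s, hs, -, hdepth⟩ := T.exists_min_parent h
  have := hle s hs
  rw [hdepth, if_neg (by omega)]
  omega

/-- By induction on the generation: the parents of `v` are the corners of a triangle whose apex
has the two other corners among its own parents. -/
lemma depth_le_depth_add_one_of_mem_insert_parents (v : A.Vert) :
    ∀ a ∈ insert v (A.parents v), ∀ b ∈ insert v (A.parents v),
      T.depth a ≤ T.depth b + 1 := by
  induction hg : A.gen v using Nat.strong_induction_on generalizing v with
  | _ g ih =>
  subst hg
  by_cases hle : A.gen v ≤ A.gen T.apex
  · intro a ha b _
    have ha' : A.gen a ≤ A.gen T.apex := by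
      rcases ha with rfl | ha
      exacts [hle, (gen_lt_of_mem_parents ha).le.trans hle]
    have := T.depth_le_one_of_gen_le ha'
    omega
  push Not at hle
  have hv : 2 ≤ A.gen v := by have := A.gen_pos T.apex; omega
  have hspread : ∀ a ∈ A.parents v, ∀ b ∈ A.parents v, T.depth a ≤ T.depth b + 1 := by
    set C := creator hv
    have hC : A.gen C.apex < A.gen v :=
      gen_lt_of_mem_parents (by rw [parents_eq_verts_creator hv]; exact Set.mem_insert _ _)
    rw [parents_eq_verts_creator hv]
    intro a ha b hb
    by_cases h1 : A.gen C.apex = 1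
    · have := T.depth_le_one_of_gen_le
        ((C.gen_le_of_mem_verts ha).trans (h1.trans_le (A.gen_pos T.apex)))
      omega
    · have hsub := C.verts_subset_insert_parents (by have := A.gen_pos C.apex; omega)
      exact ih _ hC C.apex rfl a (hsub ha) b (hsub hb)
  obtain ⟨s, hs, hmin, hdepth⟩ := T.exists_min_parent hle
  rintro a (rfl | ha) b (rfl | hb)
  · omega
  · have := hmin b hb
    split_ifs at hdepth <;> omega
  · have := hspread a ha s hs
    split_ifs at hdepth <;> omega
  · exact hspread a ha b hb

lemma depth_le_depth_add_one_of_adj {v w : A.Vert} (h : A.adj v w) :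
    T.depth v ≤ T.depth w + 1 := by
  rcases lt_trichotomy (A.gen v) (A.gen w) with hlt | heq | hgt
  · exact T.depth_le_depth_add_one_of_mem_insert_parents w v
      (Or.inr ⟨A.adj_symm _ _ h, hlt⟩) w (Set.mem_insert _ _)
  · have := T.depth_le_one_of_gen_le ((A.adj_gen v w h heq).trans_le (A.gen_pos T.apex))
    omega
  · exact T.depth_le_depth_add_one_of_mem_insert_parents v v (Set.mem_insert _ _) w
      (Or.inr ⟨h, hgt⟩)

lemma le_depth_chain (n : ℕ) : n / 3 + 2 ≤ T.depth (T.chain n) := by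
  induction n using Nat.strong_induction_on with
  | _ n ih =>
  have hgen : A.gen T.apex < A.gen (T.chain n) := by rw [gen_chain]; omega
  rcases lt_or_ge n 3 with hn | hn
  · suffices 2 ≤ T.depth (T.chain n) by omega
    refine T.succ_le_depth hgen le_rfl fun a ha => ?_
    rw [parents_chain] at ha
    rcases T.mem_verts_iterate_next ha with ha | ⟨i, hi, rfl⟩
    · exact (T.depth_of_mem ha).ge
    · have := ih i (by omega)
      omega
  · obtain ⟨n, rfl⟩ : ∃ m, n = m + 3 := ⟨n - 3, by omega⟩
    suffices n / 3 + 2 + 1 ≤ T.depth (T.chain (n + 3)) by omega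
    refine T.succ_le_depth hgen (by omega) fun a ha => ?_
    rw [parents_chain, verts_iterate_next_add_three] at ha
    have h2 := ih (n + 2) (by omega)
    have h1 := ih (n + 1) (by omega)
    have h0 := ih n (by omega)
    rcases ha with rfl | rfl | rfl <;> omega

def region : Set A.Vert := {v | 1 ≤ T.depth v}

def interior : Set A.Vert := {v | 2 ≤ T.depth v}

@[simp]
lemma mem_region {v : A.Vert} : v ∈ T.region ↔ 1 ≤ T.depth v := Iff.rfl

@[simp]
lemma mem_interior {v : A.Vert} : v ∈ T.interior ↔ 2 ≤ T.depth v := Iff.rfl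

lemma verts_subset_region : T.verts ⊆ T.region := fun _ hv => (T.depth_of_mem hv).ge

lemma interior_subset_region : T.interior ⊆ T.region := fun _ hv => Nat.one_le_of_lt hv

lemma region_eq_verts_union_interior : T.region = T.verts ∪ T.interior := by
  refine (Set.union_subset T.verts_subset_region T.interior_subset_region).antisymm' ?_
  intro v hv
  by_contra hvi
  simp only [Set.mem_union, not_or] at hvi
  by_cases hg : A.gen v ≤ A.gen T.apex
  · exact absurd hv (by simp [region, T.depth_of_notMem_of_gen_le hvi.1 hg])
  obtain ⟨s, -, -, hdepth⟩ := T.exists_min_parent (not_le.1 hg)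
  simp only [mem_region, mem_interior] at hv hvi
  split_ifs at hdepth <;> omega

lemma gen_lt_of_mem_interior {v : A.Vert} (hv : v ∈ T.interior) : A.gen T.apex < A.gen v := by
  by_contra! h
  have := T.depth_le_one_of_gen_le h
  exact absurd hv (by simp only [mem_interior]; omega)

lemma notMem_region_of_gen_le {v : A.Vert} (hv : v ∉ T.verts) (h : A.gen v ≤ A.gen T.apex) :
    v ∉ T.region := by
  simp [T.depth_of_notMem_of_gen_le hv h]

lemma disjoint_verts_interior_of_gen_le {T' : Triangle A} (h : A.gen T.apex ≤ A.gen T'.apex) :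
    Disjoint T.verts T'.interior :=
  Set.disjoint_left.2 fun _ hv hv' =>
    (T'.gen_lt_of_mem_interior hv').not_ge ((T.gen_le_of_mem_verts hv).trans h)

lemma parents_subset_region {v : A.Vert} (hv : v ∈ T.interior) : A.parents v ⊆ T.region := by
  obtain ⟨s, -, hmin, hdepth⟩ := T.exists_min_parent (T.gen_lt_of_mem_interior hv)
  intro a ha
  have := hmin a ha
  simp only [mem_region, mem_interior] at hv ⊢
  split_ifs at hdepth <;> omega

lemma mem_interior_of_parents_subset {v : A.Vert} (h : A.gen T.apex < A.gen v)
    (hp : A.parents v ⊆ T.region) : v ∈ T.interior :=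
  T.succ_le_depth h le_rfl hp

lemma notMem_interior_of_adj {v w : A.Vert} (h : A.adj v w) (hw : w ∉ T.region) :
    v ∉ T.interior := by
  have := T.depth_le_depth_add_one_of_adj h
  simp only [mem_region, mem_interior] at hw ⊢
  omega

lemma child_mem_interior : T.child ∈ T.interior :=
  T.mem_interior_of_parents_subset (by rw [gen_child]; omega)
    (T.parents_child ▸ T.verts_subset_region)

lemma chain_mem_region_iterate_next {m l : ℕ} (h : m ≤ l) :
    T.chain l ∈ (next^[m + 3] T).region := by
  obtain ⟨d, rfl⟩ := Nat.exists_eq_add_of_le h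
  rcases lt_or_ge d 3 with hd | hd
  · apply verts_subset_region
    rw [verts_iterate_next_add_three]
    interval_cases d <;> simp
  · obtain ⟨e, rfl⟩ : ∃ e, d = e + 3 := ⟨d - 3, by omega⟩
    have := (next^[m + 3] T).le_depth_chain e
    rw [chain_iterate_next, show e + (m + 3) = m + (e + 3) by ring] at this
    exact Nat.one_le_of_lt this

variable {T}

lemma interior_subset_interior {T' : Triangle A} (hgen : A.gen T.apex ≤ A.gen T'.apex)
    (hverts : T'.verts ⊆ T.region) : T'.interior ⊆ T.interior := by
  intro v hv
  induction hg : A.gen v using Nat.strong_induction_on generalizing v with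
  | _ g ih =>
  subst hg
  refine T.mem_interior_of_parents_subset (hgen.trans_lt (T'.gen_lt_of_mem_interior hv)) ?_
  intro w hw
  have hw' : w ∈ T'.verts ∪ T'.interior :=
    T'.region_eq_verts_union_interior ▸ T'.parents_subset_region hv hw
  rcases hw' with hw' | hw'
  · exact hverts hw'
  · exact T.interior_subset_region (ih _ (gen_lt_of_mem_parents hw) hw' rfl)

lemma region_subset_interior {T' : Triangle A} (hgen : A.gen T.apex ≤ A.gen T'.apex)
    (hverts : T'.verts ⊆ T.interior) : T'.region ⊆ T.interior := by
  rw [region_eq_verts_union_interior]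
  exact Set.union_subset hverts
    (interior_subset_interior hgen (hverts.trans T.interior_subset_region))

lemma parents_eq_verts_of_subset {v : A.Vert} (hv : 2 ≤ A.gen v) (h : A.parents v ⊆ T.verts) :
    A.parents v = T.verts :=
  Set.eq_of_subset_of_ncard_le h (by rw [ncard_verts, ncard_parents hv]) (by simp [verts])

/-- A common interior vertex of least generation would have its three parents at corners of both
triangles. -/
lemma disjoint_interior {T' : Triangle A} (h₁ : Disjoint T.verts T'.interior)
    (h₂ : Disjoint T'.verts T.interior) (hne : T.verts ≠ T'.verts) :
    Disjoint T.interior T'.interior := by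
  rw [Set.disjoint_left]
  intro v hv hv'
  induction hg : A.gen v using Nat.strong_induction_on generalizing v with
  | _ g ih =>
  subst hg
  have hv2 : 2 ≤ A.gen v := by
    have := T.gen_lt_of_mem_interior hv
    have := A.gen_pos T.apex
    omega
  have hmem : ∀ w ∈ A.parents v, w ∈ T.verts ∧ w ∈ T'.verts := by
    intro w hw
    have hT := T.region_eq_verts_union_interior ▸ T.parents_subset_region hv hw
    have hT' := T'.region_eq_verts_union_interior ▸ T'.parents_subset_region hv' hw
    have hboth : ¬ (w ∈ T.interior ∧ w ∈ T'.interior) :=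
      fun hw' => ih _ (gen_lt_of_mem_parents hw) hw'.1 hw'.2 rfl
    rcases hT with hT | hT <;> rcases hT' with hT' | hT'
    · exact ⟨hT, hT'⟩
    · exact absurd hT' (Set.disjoint_left.1 h₁ hT)
    · exact absurd hT (Set.disjoint_left.1 h₂ hT')
    · exact absurd ⟨hT, hT'⟩ hboth
  exact hne ((parents_eq_verts_of_subset hv2 fun w hw => (hmem w hw).1).symm.trans
    (parents_eq_verts_of_subset hv2 fun w hw => (hmem w hw).2))

lemma disjoint_interior_of_gen_eq {T' : Triangle A} (hgen : A.gen T.apex = A.gen T'.apex)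
    (hne : T.verts ≠ T'.verts) : Disjoint T.interior T'.interior :=
  disjoint_interior (T.disjoint_verts_interior_of_gen_le hgen.le)
    (T'.disjoint_verts_interior_of_gen_le hgen.ge) hne

lemma disjoint_region_of_gen_eq {T' : Triangle A} (hgen : A.gen T.apex = A.gen T'.apex)
    (hd : Disjoint T.verts T'.verts) : Disjoint T.region T'.region := by
  have hne : T.verts ≠ T'.verts := fun h =>
    Set.disjoint_left.1 hd (Set.mem_insert _ _) (h ▸ Set.mem_insert _ _)
  rw [region_eq_verts_union_interior, region_eq_verts_union_interior, Set.disjoint_union_left,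
    Set.disjoint_union_right, Set.disjoint_union_right]
  exact ⟨⟨hd, T.disjoint_verts_interior_of_gen_le hgen.le⟩,
    (T'.disjoint_verts_interior_of_gen_le hgen.ge).symm, disjoint_interior_of_gen_eq hgen hne⟩

lemma disjoint_region_interior {P Q V : Triangle A} (hQ : Q.verts ⊆ insert P.child P.verts)
    (hQgen : A.gen P.apex ≤ A.gen Q.apex) (hPV : A.gen P.apex = A.gen V.apex) {z : A.Vert}
    (hzP : z ∈ P.verts) (hzV : z ∉ V.verts) : Disjoint Q.region V.interior := by
  have hQP : Q.verts ⊆ P.region := hQ.trans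
    (Set.insert_subset (P.interior_subset_region P.child_mem_interior) P.verts_subset_region)
  have hchild : P.child ∉ V.interior := V.notMem_interior_of_adj (P.adj_child hzP)
    (V.notMem_region_of_gen_le hzV ((P.gen_le_of_mem_verts hzP).trans hPV.le))
  have hPV' : P.verts ≠ V.verts := fun h => hzV (h ▸ hzP)
  rw [region_eq_verts_union_interior, Set.disjoint_union_left]
  refine ⟨Set.disjoint_left.2 fun v hv hvV => ?_,
    ((disjoint_interior_of_gen_eq hPV hPV').mono_left (interior_subset_interior hQgen hQP))⟩
  rcases hQ hv with rfl | hv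
  · exact hchild hvV
  · exact Set.disjoint_left.1 (P.disjoint_verts_interior_of_gen_le hPV.le) hv hvV

lemma depth_add_depth_le_dist {T' : Triangle A} (h : Disjoint T.region T'.region) {k : ℕ}
    {x y : {v : A.Vert // A.gen v ≤ k}} (hx : x.1 ∈ T.region) (hy : y.1 ∈ T'.region)
    (hxy : (A.G k).Reachable x y) : T.depth x + T'.depth y ≤ (A.G k).dist x y + 1 := by
  have hdisj : ∀ v, T.depth v = 0 ∨ T'.depth v = 0 := by
    intro v
    by_contra! hv
    have hT : v ∈ T.region := Nat.one_le_iff_ne_zero.2 hv.1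
    exact Set.disjoint_left.1 h hT (Nat.one_le_iff_ne_zero.2 hv.2)
  -- 1-Lipschitz because no vertex has positive depth in both triangles
  let f : {v : A.Vert // A.gen v ≤ k} → ℤ := fun v =>
    ((T.depth v - 1 : ℕ) : ℤ) - T'.depth v
  have hlip : ∀ a b, (A.G k).Adj a b → f a ≤ f b + 1 := by
    intro a b hab
    have := T.depth_le_depth_add_one_of_adj hab
    have := T.depth_le_depth_add_one_of_adj (A.adj_symm _ _ hab)
    have := T'.depth_le_depth_add_one_of_adj hab
    have := T'.depth_le_depth_add_one_of_adj (A.adj_symm _ _ hab)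
    have := hdisj a
    have := hdisj b
    simp only [f]
    omega
  have hdist := hxy.sub_le_dist hlip
  have := hdisj x
  have := hdisj y
  rw [mem_region] at hx hy
  simp only [f] at hdist
  omega

variable (T)

lemma region_inner_subset_interior : T.inner.region ⊆ T.interior := by
  refine region_subset_interior (by rw [gen_inner]; omega) ?_
  rw [inner, show 3 = 0 + 3 from rfl, verts_iterate_next_add_three]
  rintro v (rfl | rfl | rfl) <;> exact (T.le_depth_chain _).trans' (by omega)

/-- The later side triangles lie in the face of `next^[j + 4] T`, whose apex `T.chain (j + 3)` is
also the apex of `T.side j`. -/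
lemma disjoint_interior_side {j j' : ℕ} (h : j < j') :
    Disjoint (T.side j).interior (T.side j').interior := by
  have hgen : A.gen (next^[j + 1 + 3] T).apex = A.gen T.apex + j + 4 := by
    rw [gen_apex_iterate_next]; omega
  have hnested : (T.side j').interior ⊆ (next^[j + 1 + 3] T).interior := by
    refine interior_subset_interior (by rw [hgen, gen_side]; omega) ?_
    rw [verts_side]
    rintro v (rfl | rfl | rfl) <;> exact T.chain_mem_region_iterate_next (by omega)
  refine (disjoint_interior_of_gen_eq (by rw [hgen, gen_side]) fun hverts => ?_).mono_right
    hnested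
  have hj : T.chain j ∈ (next^[j + 1 + 3] T).verts := by
    rw [← hverts, verts_side]
    simp
  rw [verts_iterate_next_add_three] at hj
  rcases hj with hj | hj | hj <;> have := T.chain_injective hj <;> omega

open Function in
lemma pairwise_disjoint_region_inner_side :
    Pairwise (Disjoint on fun j : ℕ => (T.side j).inner.region) :=
  (pairwise_disjoint_on _).2 fun j j' h =>
    (T.disjoint_interior_side h).mono (T.side j).region_inner_subset_interior
      (T.side j').region_inner_subset_interior

noncomputable def fan : Fin 3 → Triangle A :=
  ![T.next.nextBase, T.nextBase.nextRight, T.nextRight.inner]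

lemma gen_fan_castSucc (i : Fin 2) : A.gen (T.fan i.castSucc).apex = A.gen T.apex + 2 := by
  fin_cases i <;> simp [fan, next, nextBase, nextRight, gen_child]

lemma gen_fan_le (i : Fin 3) : A.gen (T.fan i).apex ≤ A.gen T.apex + 4 := by
  fin_cases i <;> simp [fan, next, nextBase, nextRight, gen_child, gen_inner]

lemma left_notMem_verts_nextRight : T.left ∉ T.nextRight.verts := by
  simp only [nextRight, verts, Set.mem_insert_iff, Set.mem_singleton_iff, not_or]
  refine ⟨fun h => ?_, T.apex_ne_left.symm, T.left_ne_right⟩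
  have := congrArg A.gen h
  rw [gen_child] at this
  have := T.gen_left_le
  omega

lemma next_child_ne_nextBase_child : T.next.child ≠ T.nextBase.child := fun h => by
  have hmem : T.apex ∈ A.parents T.nextBase.child := by
    rw [← h, parents_child]
    simp [next, verts]
  rw [parents_child] at hmem
  rcases hmem with h' | h' | h'
  · have := congrArg A.gen h'
    rw [show T.nextBase.apex = T.child from rfl, gen_child] at this
    omega
  exacts [T.apex_ne_left h', T.apex_ne_right h']

lemma disjoint_region_fan_zero_one : Disjoint (T.fan 0).region (T.fan 1).region := by
  have hc₁ : A.gen T.next.child = A.gen T.apex + 2 :=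
    T.next.gen_child.trans (congrArg (· + 1) T.gen_child)
  have hc₂ : A.gen T.nextBase.child = A.gen T.apex + 2 :=
    T.nextBase.gen_child.trans (congrArg (· + 1) T.gen_child)
  have hchild := T.gen_child
  have hl := T.gen_left_le
  have hr := T.gen_right_le
  refine disjoint_region_of_gen_eq (hc₁.trans hc₂.symm) (Set.disjoint_left.2 ?_)
  change ∀ v, v ∈ ({T.next.child, T.apex, T.left} : Set A.Vert) →
    v ∉ ({T.nextBase.child, T.child, T.right} : Set A.Vert)
  rintro v (rfl | rfl | rfl) (h | h | h)
  all_goals first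
    | exact T.next_child_ne_nextBase_child h
    | exact T.apex_ne_right h
    | exact T.left_ne_right h
    | (have := congrArg A.gen h; omega)

lemma disjoint_region_fan_zero_two : Disjoint (T.fan 0).region (T.fan 2).region :=
  (disjoint_region_interior (V := T.nextRight) (z := T.left) T.next.verts_nextBase_subset
    (by simp [nextBase, gen_child]) rfl (by simp [next, verts])
    T.left_notMem_verts_nextRight).mono_right T.nextRight.region_inner_subset_interior

lemma disjoint_region_fan_one_two : Disjoint (T.fan 1).region (T.fan 2).region :=
  (disjoint_region_interior (V := T.nextRight) (z := T.left) T.nextBase.verts_nextRight_subset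
    (by simp [nextRight, gen_child]) rfl (by simp [nextBase, verts])
    T.left_notMem_verts_nextRight).mono_right T.nextRight.region_inner_subset_interior

open Function in
lemma pairwise_disjoint_region_fan : Pairwise (Disjoint on fun i => (T.fan i).region) := by
  refine (pairwise_disjoint_on _).2 fun i j h => ?_
  fin_cases i <;> fin_cases j
  all_goals first
    | exact absurd h (by decide)
    | exact T.disjoint_region_fan_zero_one
    | exact T.disjoint_region_fan_zero_two
    | exact T.disjoint_region_fan_one_two

end Triangle

open Function in
theorem min_le_card_of_pairwise_disjoint {N r k : ℕ} (T : Fin N → Triangle A)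
    (hT : Pairwise (Disjoint on fun i => (T i).region)) (hr : 1 ≤ r)
    (hgen : ∀ i, A.gen (T i).apex + 3 * r ≤ k + 2) {S : Finset {v : A.Vert // A.gen v ≤ k}}
    (hS : IsPorousExpDomSet (A.G k) S) : min N (2 ^ r) ≤ S.card := by
  let x : Fin N → {v : A.Vert // A.gen v ≤ k} := fun i =>
    ⟨(T i).chain (3 * (r - 1)), by have := hgen i; rw [Triangle.gen_chain]; omega⟩
  have hx : ∀ i, r + 1 ≤ (T i).depth (x i) := fun i => by
    have := (T i).le_depth_chain (3 * (r - 1))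
    exact (by omega : r + 1 ≤ (T i).depth ((T i).chain (3 * (r - 1))))
  refine hS.min_le_card x fun i j hij hreach => ?_
  have hi := hx i
  have hj := hx j
  have := Triangle.depth_add_depth_le_dist (hT hij) (by simp only [Triangle.mem_region]; omega)
    (by simp only [Triangle.mem_region]; omega) hreach
  omega

theorem le_card_of_isPorousExpDomSet {k N : ℕ} (hk : 1 ≤ k) (hN : 6 * N ≤ k + 8)
    {S : Finset {v : A.Vert // A.gen v ≤ k}} (hS : IsPorousExpDomSet (A.G k) S) :
    N ≤ S.card := by
  obtain ⟨T, hT⟩ := A.exists_triangle_gen_one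
  rcases (by omega : N ≤ 1 ∨ N = 2 ∨ N = 3 ∨ 4 ≤ N) with hN1 | rfl | rfl | hN4
  · have : Nonempty {v : A.Vert // A.gen v ≤ k} := ⟨⟨T.apex, by omega⟩⟩
    have := hS.nonempty.card_pos
    omega
  · simpa using min_le_card_of_pairwise_disjoint (r := 1) (T.fan ∘ Fin.castSucc)
      (T.pairwise_disjoint_region_fan.comp_of_injective (Fin.castSucc_injective 2)) le_rfl
      (fun i => by have := T.gen_fan_castSucc i; simp only [Function.comp_apply]; omega) hS
  · simpa using min_le_card_of_pairwise_disjoint (r := 2) T.fan T.pairwise_disjoint_region_fan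
      (by norm_num) (fun i => by have := T.gen_fan_le i; omega) hS
  · have := min_le_card_of_pairwise_disjoint (r := N - 2) (fun j : Fin N => (T.side j).inner)
      (T.pairwise_disjoint_region_inner_side.comp_of_injective Fin.val_injective) (by omega)
      (fun j => by rw [T.gen_inner_side]; have := j.isLt; omega) hS
    rwa [min_eq_left (le_two_pow_sub_two hN4)] at this

end ApollonianNetwork

theorem stmt2 (A : ApollonianNetwork) (k : ℕ) (hk : 1 ≤ k) :
    (⌈(2 * (k : ℚ) + 5) / 12⌉.toNat : ℕ∞) ≤ porousExpDomNum (A.G k) :=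
  le_porousExpDomNum fun _ hS =>
    A.le_card_of_isPorousExpDomSet hk (by have := twelve_mul_ceil_toNat_le k; omega) hS
end

section
/- For every k ≥ 2, every vertex of V(G_{k-1}) (i.e., every vertex belonging to a generation U_j with j ≤ k-1) has a neighbor in the k-th generation U_k in the Apollonian network G_k. -/
/-! Every vertex of `G_k` is a corner of a triangle of `G_k` whose apex lies in generation
exactly `k`: for `k = 1` this is the triangle `U₁`, and a triangle at level `k` is split by its
child in `U_{k+1}` into three triangles at level `k + 1` that together cover the old corners,
while a vertex of `U_{k+1}` is the apex of the triangle it forms with two of its parents.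
The child of a triangle through `v` at level `k - 1` is then a neighbour of `v` in `U_k`. -/

namespace ApollonianNetwork

variable (A : ApollonianNetwork)

/-- The configurations to which `attach` adds a vertex of generation `k + 1`. -/
def IsApexTriangle (k : ℕ) (u x y : A.Vert) : Prop :=
  A.gen u = k ∧ A.gen x ≤ k ∧ A.gen y ≤ k ∧ A.adj u x ∧ A.adj u y ∧ A.adj x y

lemma exists_apexTriangle_one :
    ∃ u x y, A.IsApexTriangle 1 u x y ∧ ∀ v, A.gen v = 1 → v = u ∨ v = x ∨ v = y := by
  obtain ⟨a, b, c, hab, hac, hbc, hU₁⟩ := A.U1_card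
  have hgen : ∀ v, A.gen v = 1 ↔ v = a ∨ v = b ∨ v = c := fun v => Set.ext_iff.mp hU₁ v
  have ha := (hgen a).mpr (by simp)
  have hb := (hgen b).mpr (by simp)
  have hc := (hgen c).mpr (by simp)
  exact ⟨a, b, c, ⟨ha, hb.le, hc.le, A.U1_complete a b ha hb hab,
    A.U1_complete a c ha hc hac, A.U1_complete b c hb hc hbc⟩, fun v => (hgen v).mp⟩

variable {A}

lemma adj_of_neighbors_eq {P : A.Vert → Prop} {v u x y : A.Vert}
    (h : {w | A.adj v w ∧ P w} = {u, x, y}) : A.adj v u ∧ A.adj v x ∧ A.adj v y := by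
  have hmem : ∀ z ∈ ({u, x, y} : Set A.Vert), A.adj v z := fun z hz => (h ▸ hz).1
  exact ⟨hmem u (by simp), hmem x (by simp), hmem y (by simp)⟩

lemma IsApexTriangle.swap {k : ℕ} {u x y : A.Vert} (h : A.IsApexTriangle k u x y) :
    A.IsApexTriangle k u y x :=
  let ⟨hu, hx, hy, hux, huy, hxy⟩ := h
  ⟨hu, hy, hx, huy, hux, A.adj_symm x y hxy⟩

lemma IsApexTriangle.exists_child {k : ℕ} (hk : 1 ≤ k) {u x y : A.Vert}
    (h : A.IsApexTriangle k u x y) :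
    ∃ w, A.gen w = k + 1 ∧ A.adj w u ∧ A.adj w x ∧ A.adj w y := by
  obtain ⟨hu, hx, hy, hux, huy, hxy⟩ := h
  have hxy_ne : x ≠ y := fun h => A.adj_irrefl x (h ▸ hxy)
  obtain ⟨w, ⟨hw, hNw⟩, -⟩ := A.attach k hk u x y hu hx hy hxy_ne hux huy hxy
  exact ⟨w, hw, adj_of_neighbors_eq hNw⟩

lemma IsApexTriangle.child {k : ℕ} {u x y w : A.Vert} (h : A.IsApexTriangle k u x y)
    (hw : A.gen w = k + 1) (hwu : A.adj w u) (hwx : A.adj w x) :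
    A.IsApexTriangle (k + 1) w u x :=
  let ⟨hu, hx, _, hux, _⟩ := h
  ⟨hw, by omega, by omega, hwu, hwx, hux⟩

lemma exists_apexTriangle_of_gen_le {k : ℕ} (hk : 1 ≤ k) {v : A.Vert} (hv : A.gen v ≤ k) :
    ∃ u x y, A.IsApexTriangle k u x y ∧ (v = u ∨ v = x ∨ v = y) := by
  induction k, hk using Nat.le_induction generalizing v with
  | base =>
    obtain ⟨u, x, y, hT, hU₁⟩ := A.exists_apexTriangle_one
    exact ⟨u, x, y, hT, hU₁ v (le_antisymm hv (A.gen_pos v))⟩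
  | succ k hk ih =>
    rcases Nat.lt_or_ge (A.gen v) (k + 1) with hlt | hge
    · obtain ⟨u, x, y, hT, hv⟩ := ih (Nat.lt_succ_iff.mp hlt)
      obtain ⟨w, hw, hwu, hwx, hwy⟩ := hT.exists_child hk
      rcases hv with rfl | rfl | rfl
      · exact ⟨w, v, x, hT.child hw hwu hwx, by simp⟩
      · exact ⟨w, u, v, hT.child hw hwu hwx, by simp⟩
      · exact ⟨w, u, v, hT.swap.child hw hwu hwy, by simp⟩
    · have hgv : A.gen v = k + 1 := le_antisymm hv hge
      obtain ⟨u, x, y, hu, hx, -, hux, -, -, hNv⟩ := A.created v (by omega)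
      obtain ⟨hvu, hvx, -⟩ := adj_of_neighbors_eq hNv
      exact ⟨v, u, x, ⟨hgv, by omega, by omega, hvu, hvx, hux⟩, by simp⟩

end ApollonianNetwork

theorem stmt10 (A : ApollonianNetwork) (k : ℕ) (hk : 2 ≤ k) :
    ∀ v : A.Vert, A.gen v ≤ k - 1 → ∃ u : A.Vert, A.gen u = k ∧ A.adj v u := by
  intro v hv
  obtain ⟨m, rfl⟩ : ∃ m, k = m + 1 := ⟨k - 1, by omega⟩
  have hm : 1 ≤ m := by omega
  rw [Nat.add_sub_cancel] at hv
  obtain ⟨u, x, y, hT, hv⟩ := A.exists_apexTriangle_of_gen_le hm hv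
  obtain ⟨w, hw, hwu, hwx, hwy⟩ := hT.exists_child hm
  refine ⟨w, hw, A.adj_symm w v ?_⟩
  rcases hv with rfl | rfl | rfl <;> assumption
end

section
/- For every k ≥ 5, the porous exponential domination number of the k-th Apollonian network satisfies γ*_e(G_k) ≤ 2·3^(k-5). -/
/-!
A vertex `v` of generation `g ≥ 2` has exactly three earlier neighbours: its parent `u`, of
generation `g - 1`, and two of the three earlier neighbours of `u`. Descending three times shows
that every vertex of `G_k` is equal or adjacent to a vertex of `G_{k-3}`. So for `a ∈ U₁`, the set
`S = {a} ∪ U₂ ∪ ⋯ ∪ U_{k-3}` is a porous exponential dominating set: a vertex of `G_{k-3}` outside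
`S` lies in `U₁`, so it is adjacent to both `a` and the vertex of `U₂`, which thus each contribute
at least `1/2` at it and at its neighbours. A vertex of `U_{j+1}` is determined by its parent `u`
and the earlier neighbour of `u` it avoids, so `|U_{j+1}| ≤ 3 |U_j|`; with `|U₂| = 1` this gives
`|S| ≤ 1 + (3^(k-4) - 1) / 2 ≤ 2 · 3^(k-5)`.
-/

open SimpleGraph Set

theorem Set.encard_biUnion_le_mul {α ι : Type*} {t : Set ι} {s : ι → Set α} {n : ℕ∞}
    (h : ∀ i ∈ t, (s i).encard ≤ n) : (⋃ i ∈ t, s i).encard ≤ n * t.encard := by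
  obtain ht | ht := t.finite_or_infinite
  · obtain ⟨t, rfl⟩ := ht.exists_finset_coe
    simp only [Finset.mem_coe, encard_coe_eq_coe_finsetCard] at h ⊢
    calc (⋃ i ∈ t, s i).encard ≤ ∑ i ∈ t, (s i).encard := t.set_encard_biUnion_le s
      _ ≤ t.card • n := Finset.sum_le_card_nsmul _ _ _ h
      _ = n * t.card := by rw [nsmul_eq_mul, mul_comm]
  · obtain rfl | hn := eq_or_ne n 0
    · have hempty : ∀ i ∈ t, s i = ∅ := fun i hi =>
        encard_eq_zero.mp (nonpos_iff_eq_zero.mp (h i hi))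
      simp_all
    · rw [ht.encard_eq, ENat.mul_top hn]
      exact le_top

theorem Set.exists_mem_diff_singleton_eq_pair {α : Type*} {s : Set α} {x y : α}
    (hs : s.encard = 3) (hx : x ∈ s) (hy : y ∈ s) (hxy : x ≠ y) :
    ∃ z ∈ s, s \ {z} = {x, y} := by
  obtain ⟨a, b, c, hab, hac, hbc, rfl⟩ := encard_eq_three.mp hs
  simp only [mem_insert_iff, mem_singleton_iff] at hx hy
  rcases hx with rfl | rfl | rfl <;> rcases hy with rfl | rfl | rfl
  all_goals first
    | exact absurd rfl hxy
    | exact ⟨a, by simp, by ext; simp only [mem_sdiff, mem_insert_iff, mem_singleton_iff]; grind⟩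
    | exact ⟨b, by simp, by ext; simp only [mem_sdiff, mem_insert_iff, mem_singleton_iff]; grind⟩
    | exact ⟨c, by simp, by ext; simp only [mem_sdiff, mem_insert_iff, mem_singleton_iff]; grind⟩

section ExpWeight

variable {V : Type*} {G : SimpleGraph V} {S : Finset V} {s t v : V}

open Classical in
theorem expWeight_term_nonneg (u v : V) :
    0 ≤ if G.Reachable u v then 2 * (2 : ℝ)⁻¹ ^ G.dist u v else 0 := by
  split_ifs <;> positivity

open Classical in
theorem le_expWeight_term (p : G.Walk s v) :
    2 * (2 : ℝ)⁻¹ ^ p.length ≤ if G.Reachable s v then 2 * (2 : ℝ)⁻¹ ^ G.dist s v else 0 := by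
  rw [if_pos p.reachable]
  gcongr 2 * ?_
  exact pow_le_pow_of_le_one (by norm_num) (by norm_num) (dist_le p)

theorem one_le_expWeight_of_length_le_one (hs : s ∈ S) (p : G.Walk s v) (hp : p.length ≤ 1) :
    1 ≤ expWeight G S v := by
  classical
  calc (1 : ℝ) ≤ 2 * (2 : ℝ)⁻¹ ^ p.length := by
        linarith [pow_le_pow_of_le_one (by norm_num : (0 : ℝ) ≤ 2⁻¹) (by norm_num) hp]
    _ ≤ _ := le_expWeight_term p
    _ ≤ expWeight G S v := Finset.single_le_sum (fun u _ => expWeight_term_nonneg u v) hs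

theorem one_le_expWeight_of_length_le_two (hs : s ∈ S) (ht : t ∈ S) (hst : s ≠ t)
    (p : G.Walk s v) (q : G.Walk t v) (hp : p.length ≤ 2) (hq : q.length ≤ 2) :
    1 ≤ expWeight G S v := by
  classical
  have half_le {u : V} (r : G.Walk u v) (hr : r.length ≤ 2) :
      (1 / 2 : ℝ) ≤ 2 * (2 : ℝ)⁻¹ ^ r.length := by
    linarith [pow_le_pow_of_le_one (by norm_num : (0 : ℝ) ≤ 2⁻¹) (by norm_num) hr]
  have hsub : {s, t} ⊆ S := Finset.insert_subset hs (Finset.singleton_subset_iff.mpr ht)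
  calc (1 : ℝ) ≤ 2 * (2 : ℝ)⁻¹ ^ p.length + 2 * (2 : ℝ)⁻¹ ^ q.length := by
        linarith [half_le p hp, half_le q hq]
    _ ≤ _ := add_le_add (le_expWeight_term p) (le_expWeight_term q)
    _ = ∑ u ∈ {s, t}, _ := by rw [Finset.sum_pair hst]
    _ ≤ expWeight G S v :=
        Finset.sum_le_sum_of_subset_of_nonneg hsub fun u _ _ => expWeight_term_nonneg u v

theorem porousExpDomNum_le_card (h : IsPorousExpDomSet G S) : porousExpDomNum G ≤ S.card :=
  sInf_le ⟨S, h, rfl⟩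

end ExpWeight

namespace ApollonianNetwork

variable (A : ApollonianNetwork)

def down (v : A.Vert) : Set A.Vert := {w | A.adj v w ∧ A.gen w < A.gen v}

variable {A} {u v x a d : A.Vert} {j k m : ℕ}

theorem ne_of_adj_s16 (h : A.adj x v) : x ≠ v := fun e => A.adj_irrefl v (e ▸ h)

theorem gen_lt_of_adj (h : A.adj u x) (hx : A.gen x ≤ A.gen u) (hu : 2 ≤ A.gen u) :
    A.gen x < A.gen u :=
  hx.lt_of_ne fun e => by have := A.adj_gen u x h e.symm; omega

theorem encard_down (hv : 2 ≤ A.gen v) : (A.down v).encard = 3 := by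
  obtain ⟨u, x, y, -, -, -, hux, huy, hxy, hD⟩ := A.created v hv
  rw [show A.down v = {u, x, y} from hD]
  exact encard_eq_three.mpr ⟨u, x, y, ne_of_adj_s16 hux, ne_of_adj_s16 huy, ne_of_adj_s16 hxy, rfl⟩

theorem down_injOn (hj : 2 ≤ j) : InjOn A.down {v | A.gen v = j} := by
  intro v (hv : A.gen v = j) v' (hv' : A.gen v' = j) hD
  obtain ⟨u, x, y, hu, hx, hy, hux, huy, hxy, hDv⟩ := A.created v (by omega)
  obtain ⟨w, -, hw⟩ := A.attach (j - 1) (by omega) u x y (by omega) (by omega) (by omega)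
    (ne_of_adj_s16 hxy) hux huy hxy
  have attached {z : A.Vert} (hz : A.gen z = j) (hDz : A.down z = {u, x, y}) :
      A.gen z = j - 1 + 1 ∧ {w | A.adj z w ∧ A.gen w ≤ j - 1} = ({u, x, y} : Set A.Vert) := by
    refine ⟨by omega, ?_⟩
    rw [← hDz]
    ext w
    exact and_congr_right fun _ => by omega
  rw [hw v (attached hv hDv), hw v' (attached hv' (hD ▸ hDv))]

theorem exists_down_eq_of_three_le (hv : 3 ≤ A.gen v) :
    ∃ u x y, A.gen u + 1 = A.gen v ∧ x ≠ y ∧ x ∈ A.down u ∧ y ∈ A.down u ∧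
      A.down v = {u, x, y} := by
  obtain ⟨u, x, y, hu, hx, hy, hux, huy, hxy, hD⟩ := A.created v (by omega)
  exact ⟨u, x, y, by omega, ne_of_adj_s16 hxy, ⟨hux, gen_lt_of_adj hux (by omega) (by omega)⟩,
    ⟨huy, gen_lt_of_adj huy (by omega) (by omega)⟩, hD⟩

theorem exists_adj_gen_add_one_eq (hv : 2 ≤ A.gen v) :
    ∃ u, A.adj v u ∧ A.gen u + 1 = A.gen v := by
  obtain ⟨u, x, y, hu, -, -, -, -, -, hD⟩ := A.created v hv
  have hu' : u ∈ A.down v := by rw [show A.down v = {u, x, y} from hD]; simp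
  exact ⟨u, hu'.1, by omega⟩

theorem exists_adj_gen_add_two_le (hv : 3 ≤ A.gen v) :
    ∃ x, A.adj v x ∧ A.gen x + 2 ≤ A.gen v := by
  obtain ⟨u, x, y, hu, -, hx, -, hD⟩ := exists_down_eq_of_three_le hv
  have hx' : x ∈ A.down v := by rw [hD]; simp
  exact ⟨x, hx'.1, by have := hx.2; omega⟩

/-- Both earlier neighbours `x ≠ y` of `v` other than its parent `u` lie in the three-element
set `A.down u`, so one of them avoids the parent of `u`. -/
theorem exists_adj_gen_add_three_le (hv : 4 ≤ A.gen v) :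
    ∃ x, A.adj v x ∧ A.gen x + 3 ≤ A.gen v := by
  obtain ⟨u, x, y, hu, hxy, hx, hy, hD⟩ := exists_down_eq_of_three_le (by omega : 3 ≤ A.gen v)
  obtain ⟨u', x', y', hu', -, hx', hy', hD'⟩ :=
    exists_down_eq_of_three_le (by omega : 3 ≤ A.gen u)
  have low {z : A.Vert} (hz : z ∈ A.down v) (hzu : z ∈ A.down u) (hzu' : z ≠ u') :
      ∃ x, A.adj v x ∧ A.gen x + 3 ≤ A.gen v := by
    rw [hD'] at hzu
    rcases hzu with h | h | h
    · exact absurd h hzu'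
    · exact ⟨x', h ▸ hz.1, by have := hx'.2; omega⟩
    · exact ⟨y', h ▸ hz.1, by have := hy'.2; omega⟩
  have hxv : x ∈ A.down v := by rw [hD]; simp
  have hyv : y ∈ A.down v := by rw [hD]; simp
  by_cases hxu' : x = u'
  · exact low hyv hy (hxu' ▸ hxy.symm)
  · exact low hxv hx hxu'

theorem exists_adj_gen_le (hm : 1 ≤ m) (hv : m < A.gen v) (hv' : A.gen v ≤ m + 3) :
    ∃ s, A.adj v s ∧ A.gen s ≤ m := by
  obtain hv1 | hv2 | hv3 : A.gen v = m + 1 ∨ A.gen v = m + 2 ∨ A.gen v = m + 3 := by omega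
  · obtain ⟨s, hs, hgs⟩ := exists_adj_gen_add_one_eq (v := v) (by omega)
    exact ⟨s, hs, by omega⟩
  · obtain ⟨s, hs, hgs⟩ := exists_adj_gen_add_two_le (v := v) (by omega)
    exact ⟨s, hs, by omega⟩
  · obtain ⟨s, hs, hgs⟩ := exists_adj_gen_add_three_le (v := v) (by omega)
    exact ⟨s, hs, by omega⟩

theorem encard_gen_eq_two_le_one : {v | A.gen v = 2}.encard ≤ 1 := by
  have hU1 : {v | A.gen v = 1}.encard = 3 := by
    obtain ⟨a, b, c, hab, hac, hbc, hU1⟩ := A.U1_card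
    exact encard_eq_three.mpr ⟨a, b, c, hab, hac, hbc, hU1⟩
  have hdown {v : A.Vert} (hv : A.gen v = 2) : A.down v = {v | A.gen v = 1} := by
    refine (finite_of_encard_eq_coe (encard_down (by omega))).eq_of_subset_of_encard_le
      (fun w hw => ?_) ?_
    · have := A.gen_pos w
      exact show A.gen w = 1 by have := hw.2; omega
    · rw [hU1, encard_down (by omega)]
  exact encard_le_one_iff.mpr fun v v' hv hv' =>
    down_injOn le_rfl hv hv' ((hdown hv).trans (hdown hv').symm)

theorem encard_gen_succ_le (hj : 2 ≤ j) :
    {v | A.gen v = j + 1}.encard ≤ 3 * {v | A.gen v = j}.encard := by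
  have hcover : {v | A.gen v = j + 1} ⊆ ⋃ u ∈ {v | A.gen v = j}, ⋃ z ∈ A.down u,
      {v | A.gen v = j + 1 ∧ A.down v = insert u (A.down u \ {z})} := by
    intro v (hv : A.gen v = j + 1)
    obtain ⟨u, x, y, hu, hxy, hx, hy, hD⟩ := exists_down_eq_of_three_le (v := v) (by omega)
    obtain ⟨z, hz, hzD⟩ := exists_mem_diff_singleton_eq_pair (encard_down (by omega)) hx hy hxy
    simp only [mem_iUnion]
    exact ⟨u, by simp only [mem_ofPred_eq]; omega, z, hz, hv, by rw [hD, hzD]⟩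
  calc {v | A.gen v = j + 1}.encard ≤ _ := encard_le_encard hcover
    _ ≤ 3 * {v | A.gen v = j}.encard := by
      refine encard_biUnion_le_mul fun u (hu : A.gen u = j) => ?_
      calc _ ≤ 1 * (A.down u).encard := encard_biUnion_le_mul fun z _ =>
            encard_le_one_iff.mpr fun v v' hv hv' =>
              down_injOn (by omega) hv.1 hv'.1 (hv.2.trans hv'.2.symm)
        _ = 3 := by rw [encard_down (by omega), one_mul]

theorem encard_gen_eq_le (hj : 2 ≤ j) : {v | A.gen v = j}.encard ≤ 3 ^ (j - 2) := by
  induction j, hj using Nat.le_induction with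
  | base => simpa using encard_gen_eq_two_le_one
  | succ j hj ih =>
    calc {v | A.gen v = j + 1}.encard ≤ 3 * {v | A.gen v = j}.encard := encard_gen_succ_le hj
      _ ≤ 3 * 3 ^ (j - 2) := by gcongr
      _ = 3 ^ (j + 1 - 2) := by rw [show j + 1 - 2 = j - 2 + 1 by omega, pow_succ']

theorem encard_gen_mem_Icc_add_one_le (hm : 2 ≤ m) :
    {v | 2 ≤ A.gen v ∧ A.gen v ≤ m}.encard + 1 ≤ 2 * 3 ^ (m - 2) := by
  induction m, hm using Nat.le_induction with
  | base =>
    have : {v | 2 ≤ A.gen v ∧ A.gen v ≤ 2} = {v | A.gen v = 2} := by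
      ext; simp only [mem_ofPred_eq]; omega
    rw [this]
    calc _ ≤ (1 : ℕ∞) + 1 := by gcongr; exact encard_gen_eq_two_le_one
      _ = 2 * 3 ^ (2 - 2) := by norm_num
  | succ m hm ih =>
    have hsplit : {v | 2 ≤ A.gen v ∧ A.gen v ≤ m + 1} ⊆
        {v | 2 ≤ A.gen v ∧ A.gen v ≤ m} ∪ {v | A.gen v = m + 1} := by
      intro v ⟨h1, h2⟩
      by_cases h : A.gen v ≤ m
      exacts [Or.inl ⟨h1, h⟩, Or.inr (by simp only [mem_ofPred_eq]; omega)]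
    calc _ ≤ {v | 2 ≤ A.gen v ∧ A.gen v ≤ m}.encard + {v | A.gen v = m + 1}.encard + 1 := by
          gcongr; exact (encard_le_encard hsplit).trans (encard_union_le _ _)
      _ = ({v | 2 ≤ A.gen v ∧ A.gen v ≤ m}.encard + 1) + {v | A.gen v = m + 1}.encard :=
          add_right_comm _ _ _
      _ ≤ 2 * 3 ^ (m - 2) + 3 ^ (m + 1 - 2) := add_le_add ih (encard_gen_eq_le (by omega))
      _ ≤ 2 * 3 ^ (m + 1 - 2) := by
          rw [show m + 1 - 2 = m - 2 + 1 by omega, pow_succ]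
          norm_cast
          omega

theorem exists_gen_two_forall_adj : ∃ d, A.gen d = 2 ∧ ∀ w, A.gen w = 1 → A.adj d w := by
  obtain ⟨a, b, c, hab, hac, hbc, hU1⟩ := A.U1_card
  have gen_one {w : A.Vert} (hw : w ∈ ({a, b, c} : Set A.Vert)) : A.gen w = 1 := by
    rw [← hU1] at hw; exact hw
  have ha := gen_one (by simp : a ∈ _)
  have hb := gen_one (by simp : b ∈ _)
  have hc := gen_one (by simp : c ∈ _)
  obtain ⟨d, ⟨hd, hD⟩, -⟩ := A.attach 1 le_rfl a b c ha hb.le hc.le hbc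
    (A.U1_complete a b ha hb hab) (A.U1_complete a c ha hc hac) (A.U1_complete b c hb hc hbc)
  refine ⟨d, hd, fun w hw => ?_⟩
  have : w ∈ {w | A.adj d w ∧ A.gen w ≤ 1} := by rw [hD, ← hU1]; exact hw
  exact this.1

theorem isPorousExpDomSet_G (hm : 2 ≤ m) (hmk : m ≤ k) (hk : k ≤ m + 3) (ha : A.gen a = 1)
    (hd : A.gen d = 2) (hdadj : ∀ w, A.gen w = 1 → A.adj d w) {S : Finset {v // A.gen v ≤ k}}
    (hS : ∀ w : {v // A.gen v ≤ k}, w.1 = a ∨ 2 ≤ A.gen w.1 ∧ A.gen w.1 ≤ m → w ∈ S) :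
    IsPorousExpDomSet (A.G k) S := by
  rintro ⟨v, hv⟩
  obtain ⟨s, hsm, p, hp⟩ : ∃ s : {v // A.gen v ≤ k}, A.gen s.1 ≤ m ∧
      ∃ p : (A.G k).Walk s ⟨v, hv⟩, p.length ≤ 1 := by
    by_cases hvm : A.gen v ≤ m
    · exact ⟨⟨v, hv⟩, hvm, Walk.nil, by simp⟩
    · obtain ⟨s, hs, hsm⟩ := exists_adj_gen_le (v := v) (m := m) (by omega) (by omega) (by omega)
      have hsv : (A.G k).Adj ⟨s, by omega⟩ ⟨v, hv⟩ := A.adj_symm v s hs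
      exact ⟨_, hsm, Walk.cons hsv Walk.nil, by simp⟩
  by_cases hsS : s.1 = a ∨ 2 ≤ A.gen s.1
  · exact one_le_expWeight_of_length_le_one (hS s (hsS.imp_right (⟨·, hsm⟩))) p hp
  · push Not at hsS
    have hs1 : A.gen s.1 = 1 := by have := A.gen_pos s.1; omega
    let a' : {v // A.gen v ≤ k} := ⟨a, by omega⟩
    let d' : {v // A.gen v ≤ k} := ⟨d, by omega⟩
    have had : a' ≠ d' := Subtype.coe_ne_coe.mp (show a ≠ d from fun h => by rw [h] at ha; omega)
    have has : (A.G k).Adj a' s := A.U1_complete a s.1 ha hs1 (Ne.symm hsS.1)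
    have hds : (A.G k).Adj d' s := hdadj s.1 hs1
    exact one_le_expWeight_of_length_le_two (hS a' (Or.inl rfl))
      (hS d' (Or.inr (show 2 ≤ A.gen d ∧ A.gen d ≤ m by omega))) had
      (Walk.cons has p) (Walk.cons hds p) (by rw [Walk.length_cons]; omega)
      (by rw [Walk.length_cons]; omega)

end ApollonianNetwork

open ApollonianNetwork in
theorem stmt16 (A : ApollonianNetwork) (k : ℕ) (hk : 5 ≤ k) :
    porousExpDomNum (A.G k) ≤ (2 * 3 ^ (k - 5) : ℕ∞) := by
  obtain ⟨d, hd, hdadj⟩ := A.exists_gen_two_forall_adj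
  obtain ⟨a, -, ha⟩ := exists_adj_gen_add_one_eq (v := d) hd.ge
  set T : Set {v // A.gen v ≤ k} := {w | w.1 = a ∨ 2 ≤ A.gen w.1 ∧ A.gen w.1 ≤ k - 3}
  have hT : T.encard ≤ 2 * 3 ^ (k - 5) :=
    calc T.encard ≤ (insert a {v | 2 ≤ A.gen v ∧ A.gen v ≤ k - 3}).encard :=
          encard_le_encard_of_injOn (fun _ hw => hw) Subtype.val_injective.injOn
      _ ≤ {v | 2 ≤ A.gen v ∧ A.gen v ≤ k - 3}.encard + 1 := encard_insert_le _ _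
      _ ≤ 2 * 3 ^ (k - 3 - 2) := encard_gen_mem_Icc_add_one_le (by omega)
      _ = 2 * 3 ^ (k - 5) := by rw [Nat.sub_sub]
  have hTfin : T.Finite := finite_of_encard_le_coe (k := 2 * 3 ^ (k - 5)) (by exact_mod_cast hT)
  calc porousExpDomNum (A.G k) ≤ hTfin.toFinset.card :=
        porousExpDomNum_le_card <| isPorousExpDomSet_G (m := k - 3) (by omega) (by omega)
          (by omega) (by omega) hd hdadj fun w hw => hTfin.mem_toFinset.mpr hw
    _ = T.encard := hTfin.encard_eq_coe_toFinset_card.symm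
    _ ≤ _ := hT
end
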